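/- arXiv:1705.09100 — 15 statements merged into one kernel-verified Lean document; each statement's English description precedes it below -/
import Mathlib

section
/- Let p > 2 and μ > 1 be real numbers and let β̃ satisfy 0 < β̃ ≤ (p−1)μ. Then there is no real number τ ∈ (0, +∞) satisfying simultaneously p·τ^{2p−2} − 2β̃·τ^p = μ(2−p) and μ + β̃·τ^p − β̃·τ^{p−2} − τ^{2p−2} = 0. -/
private lemma aux_strict (p τ : ℝ) (hp : 2 < p) (hτ : 0 < τ) (hτ1 : τ ≠ 1) :
    p * τ ^ (p - 2) - (p - 2) * τ ^ p < 2 := by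
  have hp2 : (0:ℝ) < p - 2 := by linarith
  have hx : (0:ℝ) < τ ^ (p - 2) := Real.rpow_pos_of_pos hτ _
  have hxne : τ ^ (p - 2) ≠ 1 := by
    intro h
    have hlog : (p - 2) * Real.log τ = 0 := by
      rw [← Real.log_rpow hτ, h, Real.log_one]
    have : Real.log τ = 0 := by
      rcases mul_eq_zero.mp hlog with h' | h'
      · linarith
      · exact h'
    exact hτ1 (Real.log_eq_zero.mp this |>.resolve_left (by linarith)
      |>.resolve_right (by linarith))
  have hr : 1 < p / (p - 2) := by
    rw [lt_div_iff₀ hp2]; linarith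
  have hbern := one_add_mul_self_lt_rpow_one_add
    (s := τ ^ (p - 2) - 1) (by linarith) (by intro h; apply hxne; linarith) hr
  have heq : (1 + (τ ^ (p - 2) - 1)) ^ (p / (p - 2)) = τ ^ p := by
    have : (1 + (τ ^ (p - 2) - 1)) = τ ^ (p - 2) := by ring
    rw [this, ← Real.rpow_mul hτ.le]
    congr 1; field_simp
  rw [heq] at hbern
  have h2 : 1 + p / (p - 2) * (τ ^ (p - 2) - 1) =
      (p * τ ^ (p - 2) - 2) / (p - 2) + 0 := by field_simp; ring
  rw [h2, add_zero, div_lt_iff₀ hp2] at hbern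
  nlinarith

/-- Case (B1): for `p > 2`, `μ > 1` and `0 < β̃ ≤ (p-1)μ`, the system
`p·τ^{2p-2} - 2β̃·τ^p = μ(2-p)` and `μ + β̃·τ^p - β̃·τ^{p-2} - τ^{2p-2} = 0`
has no solution `τ ∈ (0, +∞)`. -/
theorem no_solution_B1 (p μ β : ℝ) (hp : 2 < p) (hμ : 1 < μ)
    (hβ0 : 0 < β) (hβ : β ≤ (p - 1) * μ) :
    ¬ ∃ τ : ℝ, 0 < τ ∧
      p * τ ^ (2 * p - 2) - 2 * β * τ ^ p = μ * (2 - p) ∧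
      μ + β * τ ^ p - β * τ ^ (p - 2) - τ ^ (2 * p - 2) = 0 := by
  rintro ⟨τ, hτ, h1, h2⟩
  have hab : τ ^ (2 * p - 2) = τ ^ p * τ ^ (p - 2) := by
    rw [← Real.rpow_add hτ]; ring_nf
  rw [hab] at h1 h2
  have key : β * (p * τ ^ (p - 2) - (p - 2) * τ ^ p) = 2 * (p - 1) * μ := by
    linear_combination (-p) * h2 - h1
  have hge : 2 ≤ p * τ ^ (p - 2) - (p - 2) * τ ^ p := by
    nlinarith
  by_cases hτ1 : τ = 1
  · subst hτ1
    simp only [Real.one_rpow] at h2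
    linarith
  · have := aux_strict p τ hp hτ hτ1
    linarith
end

section
/- Let p > 2 and μ > 1 be real numbers with μ ≥ (1/2)·(p/(p−1))^{p−1}, and let β̃ ≥ (p−1)μ. Then there is no real number τ ∈ (1, +∞) satisfying simultaneously p·τ^{2p−2} − 2β̃·τ^p = μ(2−p) and μ + β̃·τ^p − β̃·τ^{p−2} − τ^{2p−2} = 0. -/
/-!
Put `x = τ²`. The combination `(1 - x)·(first equation) - 2x·(second equation)` eliminates `β̃`
and leaves `x^{p-1} (p - (p-2) x) = μ (p x - (p-2))`. For `x ≥ 1` the left side is at most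
`p x - (p-2) > 0`, because `(p-2) x^p - p x^{p-1} + p x` is nondecreasing on `[1, ∞)`: its
derivative is nonnegative by weighted AM-GM. This contradicts `μ > 1`.
-/

open Real Set

theorem mul_rpow_sub_one_le {t x : ℝ} (ht : 1 ≤ t) (hx : 0 ≤ x) :
    t * x ^ (t - 1) ≤ (t - 1) * x ^ t + 1 := by
  have ht₀ : 0 < t := by linarith
  have amgm := geom_mean_le_arith_mean2_weighted (w₁ := (t - 1) / t) (w₂ := 1 / t)
    (p₁ := x ^ t) (p₂ := 1) (by positivity) (by positivity) (by positivity) zero_le_one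
    (by field_simp; ring)
  rw [one_rpow, mul_one, ← rpow_mul hx, mul_div_cancel₀ _ ht₀.ne'] at amgm
  calc t * x ^ (t - 1) ≤ t * ((t - 1) / t * x ^ t + 1 / t * 1) := by gcongr
    _ = (t - 1) * x ^ t + 1 := by field_simp

theorem rpow_sub_one_mul_sub_le {p x : ℝ} (hp : 2 ≤ p) (hx : 1 ≤ x) :
    x ^ (p - 1) * (p - (p - 2) * x) ≤ p * x - (p - 2) := by
  set g : ℝ → ℝ := fun y ↦ (p - 2) * y ^ p - p * y ^ (p - 1) + p * y
  have hg : ∀ y ∈ Ici (1 : ℝ), HasDerivAt g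
      ((p - 2) * (p * y ^ (p - 1)) - p * ((p - 1) * y ^ (p - 1 - 1)) + p * 1) y := fun y hy ↦
    have hy : y ≠ 0 := (zero_lt_one.trans_le hy).ne'
    (((hasDerivAt_rpow_const (Or.inl hy)).const_mul _).sub
      ((hasDerivAt_rpow_const (Or.inl hy)).const_mul _)).add ((hasDerivAt_id y).const_mul _)
  have hmono : MonotoneOn g (Ici 1) := by
    refine monotoneOn_of_hasDerivWithinAt_nonneg (convex_Ici 1)
      (fun y hy ↦ (hg y hy).continuousAt.continuousWithinAt)
      (fun y hy ↦ (hg y (interior_subset hy)).hasDerivWithinAt) fun y hy ↦ ?_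
    have hy : 0 ≤ y := zero_le_one.trans (interior_subset hy : (1 : ℝ) ≤ y)
    have amgm := mul_rpow_sub_one_le (t := p - 1) (by linarith) hy
    rw [show p - 1 - 1 = p - 2 by ring] at amgm ⊢
    nlinarith
  have hgx : g 1 ≤ g x := hmono self_mem_Ici hx hx
  have hxp : x ^ (p - 1) * x = x ^ p := by
    rw [← rpow_add_one (zero_lt_one.trans_le hx).ne', sub_add_cancel]
  simp only [g, one_rpow] at hgx
  nlinarith

theorem no_solution_B2_general (p μ β : ℝ) (hp : 2 < p) (hμ : 1 < μ) :
    ¬ ∃ τ : ℝ, 1 < τ ∧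
      p * τ ^ (2 * p - 2) - 2 * β * τ ^ p = μ * (2 - p) ∧
      μ + β * τ ^ p - β * τ ^ (p - 2) - τ ^ (2 * p - 2) = 0 := by
  rintro ⟨τ, hτ, h₁, h₂⟩
  have hτ₀ : 0 < τ := by linarith
  have hx : 1 < τ ^ (2 : ℝ) := one_lt_rpow hτ two_pos
  have hpow₁ : τ ^ p = τ ^ (p - 2) * τ ^ (2 : ℝ) := by rw [← rpow_add hτ₀, sub_add_cancel]
  have hpow₂ : τ ^ (2 * p - 2) = (τ ^ (2 : ℝ)) ^ (p - 1) := by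
    rw [← rpow_mul hτ₀.le]; ring_nf
  set x := τ ^ (2 : ℝ)
  rw [hpow₁, hpow₂] at h₁ h₂
  have key : x ^ (p - 1) * (p - (p - 2) * x) = μ * (p * x - (p - 2)) := by
    linear_combination (1 - x) * h₁ - 2 * x * h₂
  have hpos : 0 < p * x - (p - 2) := by nlinarith
  exact (lt_mul_of_one_lt_left hpos hμ).not_ge (key ▸ rpow_sub_one_mul_sub_le hp.le hx.le)

/-- Case (B2): for `p > 2`, `μ > 1` with `μ ≥ (1/2)(p/(p-1))^{p-1}` and `β̃ ≥ (p-1)μ`,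
the system `p·τ^{2p-2} - 2β̃·τ^p = μ(2-p)`, `μ + β̃·τ^p - β̃·τ^{p-2} - τ^{2p-2} = 0`
has no solution `τ ∈ (1, +∞)`. -/
theorem no_solution_B2 (p μ β : ℝ) (hp : 2 < p) (hμ : 1 < μ)
    (hμ' : (1 / 2) * (p / (p - 1)) ^ (p - 1) ≤ μ) (hβ : (p - 1) * μ ≤ β) :
    ¬ ∃ τ : ℝ, 1 < τ ∧
      p * τ ^ (2 * p - 2) - 2 * β * τ ^ p = μ * (2 - p) ∧
      μ + β * τ ^ p - β * τ ^ (p - 2) - τ ^ (2 * p - 2) = 0 :=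
  no_solution_B2_general p μ β hp hμ
end

section
/- Let 1 < p < 2 and μ > 1 be real numbers and let β̃ ≥ (p−1)·μ^{(p−2)/(2(p−1))}. Then there is no real number τ ∈ (0, +∞) satisfying simultaneously p·τ^{2p−2} − 2β̃·τ^p = μ(2−p) and μ + β̃·τ^p − β̃·τ^{p−2} − τ^{2p−2} = 0. -/
/-!
Put `c = τ^(p-2)` and `t = τ^2`. The system is linear in `β` and `μ` and gives
`β·Y = 2(p-1)·c·t` and `μ·Y = c²t·X` with `X = (2-p)t + p`, `Y = pt + (2-p)`. Substituted into the
bound on `β`, this says `2t ≥ Y·(X/Y)^((p-2)/(2(p-1)))`. But `Y` is the mean of `2t` and `X` with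
weights `(2p-2)/p` and `(2-p)/p`, so strict weighted AM-GM gives the opposite strict inequality
unless `2t = X`, i.e. `t = 1`; and `t = 1` forces `τ = 1` and then `μ = 1`.
-/

open Real

theorem lt_rpow_neg_div_of_weighted_mean_eq_one {a b u v : ℝ} (ha : 0 < a) (hb : 0 < b)
    (hab : a + b = 1) (hu : 0 < u) (hv : 0 < v) (hmean : a * u + b * v = 1) (huv : u ≠ v) :
    u < v ^ (-b / a) := by
  have amgm : u ^ a * v ^ b < 1 :=
    hmean ▸ (geom_mean_lt_arith_mean2_weighted_iff_of_pos ha hb hu.le hv.le hab).2 huv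
  calc u = (u ^ a * v ^ b) ^ (1 / a) * v ^ (-b / a) := by
        rw [mul_rpow (by positivity) (by positivity), ← rpow_mul hu.le, ← rpow_mul hv.le,
          mul_assoc, ← rpow_add hv, mul_one_div_cancel ha.ne', rpow_one]
        ring_nf
        simp
    _ < 1 ^ (1 / a) * v ^ (-b / a) := by gcongr
    _ = v ^ (-b / a) := by rw [one_rpow, one_mul]

theorem two_mul_lt_div_rpow_mul {p t : ℝ} (hp1 : 1 < p) (hp2 : p < 2) (ht : 0 < t) (ht1 : t ≠ 1) :
    2 * t < (((2 - p) * t + p) / (p * t + (2 - p))) ^ ((p - 2) / (2 * (p - 1))) *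
      (p * t + (2 - p)) := by
  have hX : 0 < (2 - p) * t + p := by nlinarith
  have hY : 0 < p * t + (2 - p) := by nlinarith
  have hexp : (p - 2) / (2 * (p - 1)) = -((2 - p) / p) / ((2 * p - 2) / p) := by
    field_simp
    ring
  rw [← div_lt_iff₀ hY, hexp]
  refine lt_rpow_neg_div_of_weighted_mean_eq_one (by bound) (by bound) ?_ (by positivity)
    (by positivity) ?_ ?_
  · field_simp
    ring
  · field_simp
    ring
  · rw [Ne, div_left_inj' hY.ne']
    contrapose! ht1
    nlinarith

theorem rpow_eq_rpow_sub_two_mul_sq {τ : ℝ} (hτ : 0 < τ) (p : ℝ) :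
    τ ^ p = τ ^ (p - 2) * τ ^ 2 := by
  rw [← rpow_natCast, ← rpow_add hτ]
  norm_num

theorem rpow_two_mul_sub_two {τ : ℝ} (hτ : 0 < τ) (p : ℝ) :
    τ ^ (2 * p - 2) = (τ ^ (p - 2)) ^ 2 * τ ^ 2 := by
  rw [← rpow_natCast, ← rpow_natCast, ← rpow_mul hτ.le, ← rpow_add hτ]
  ring_nf

theorem rpow_two_mul_sub_two_rpow {τ p : ℝ} (hτ : 0 ≤ τ) (hp : p ≠ 1) :
    (τ ^ (2 * p - 2)) ^ ((p - 2) / (2 * (p - 1))) = τ ^ (p - 2) := by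
  rw [← rpow_mul hτ]
  congr 1
  field_simp [sub_ne_zero.2 hp]

theorem B4_system_reduce {p μ β c t : ℝ} (hc : 0 < c)
    (h₁ : p * (c ^ 2 * t) - 2 * β * (c * t) = μ * (2 - p))
    (h₂ : μ + β * (c * t) - β * c - c ^ 2 * t = 0) :
    β * (p * t + (2 - p)) = (2 * p - 2) * (c * t) ∧
      μ * (p * t + (2 - p)) = c ^ 2 * t * ((2 - p) * t + p) := by
  have hβ : β * (p * t + (2 - p)) = (2 * p - 2) * (c * t) :=
    mul_left_cancel₀ hc.ne' (by linear_combination -h₁ - (2 - p) * h₂)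
  refine ⟨hβ, mul_left_cancel₀ hc.ne' ?_⟩
  linear_combination (p * c * t + (2 - p) * c) * h₂ + (c - c * t) * c * hβ

/-- Case (B4): for `1 < p < 2`, `μ > 1` and `β̃ ≥ (p-1)μ^{(p-2)/(2(p-1))}`,
the system `p·τ^{2p-2} - 2β̃·τ^p = μ(2-p)`, `μ + β̃·τ^p - β̃·τ^{p-2} - τ^{2p-2} = 0`
has no solution `τ ∈ (0, +∞)`. -/
theorem no_solution_B4 (p μ β : ℝ) (hp1 : 1 < p) (hp2 : p < 2) (hμ : 1 < μ)
    (hβ : (p - 1) * μ ^ ((p - 2) / (2 * (p - 1))) ≤ β) :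
    ¬ ∃ τ : ℝ, 0 < τ ∧
      p * τ ^ (2 * p - 2) - 2 * β * τ ^ p = μ * (2 - p) ∧
      μ + β * τ ^ p - β * τ ^ (p - 2) - τ ^ (2 * p - 2) = 0 := by
  rintro ⟨τ, hτ, h₁, h₂⟩
  have hc : 0 < τ ^ (p - 2) := rpow_pos_of_pos hτ _
  have hY : 0 < p * τ ^ 2 + (2 - p) := by nlinarith [pow_pos hτ 2]
  rw [rpow_two_mul_sub_two hτ, rpow_eq_rpow_sub_two_mul_sq hτ p] at h₁ h₂
  obtain ⟨hβY, hμY⟩ := B4_system_reduce hc h₁ h₂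
  rw [eq_div_of_mul_eq hY.ne' hμY, ← rpow_two_mul_sub_two hτ, mul_div_assoc,
    mul_rpow (by positivity) (by positivity), rpow_two_mul_sub_two_rpow hτ.le hp1.ne'] at hβ
  rcases eq_or_ne (τ ^ 2) 1 with ht1 | ht1
  · have hτ1 : τ = 1 := (pow_eq_one_iff_of_nonneg hτ.le two_ne_zero).1 ht1
    rw [hτ1, one_rpow] at hμY
    linarith
  · have hlt := two_mul_lt_div_rpow_mul hp1 hp2 (pow_pos hτ 2) ht1
    nlinarith [mul_le_mul_of_nonneg_right hβ hY.le,
      mul_lt_mul_of_pos_left hlt (mul_pos (by linarith : 0 < p - 1) hc)]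
end

section
/- Let 1 < p < 2 and 1 < μ < p/(2−p) be real numbers, and let β̃ satisfy 0 < β̃ ≤ min{ (p − μ(2−p))/2 , 2(p−1)·(2−p)^{(2−p)/(2(p−1))}·(μ/p)^{p/(2(p−1))} }. Then there is no real number τ ∈ (0, 1) satisfying simultaneously p·τ^{2p−2} − 2β̃·τ^p = μ(2−p) and μ + β̃·τ^p − β̃·τ^{p−2} − τ^{2p−2} = 0. -/
/-!
Eliminating `β` from the two equations leaves, with `t = τ²`, the identity
`p t^(p-1) + (2-p) t^p = μ ((2-p) + p t)`. For `0 < t ≤ 1` the left side is at most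
`p t + (2-p)`, which forces `μ ≤ 1`.
-/

open Real Set

lemma one_le_weighted_rpow_add {p x : ℝ} (hp1 : 1 ≤ p) (hp2 : p ≤ 2) (hx : 0 < x) :
    1 ≤ (p - 1) * x ^ (p - 2) + (2 - p) * x ^ (p - 1) := by
  have hprod : (x ^ (p - 2)) ^ (p - 1) * (x ^ (p - 1)) ^ (2 - p) = 1 := by
    rw [← rpow_mul hx.le, ← rpow_mul hx.le, ← rpow_add hx,
      show (p - 2) * (p - 1) + (p - 1) * (2 - p) = 0 by ring, rpow_zero]
  calc 1 = (x ^ (p - 2)) ^ (p - 1) * (x ^ (p - 1)) ^ (2 - p) := hprod.symm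
    _ ≤ _ := geom_mean_le_arith_mean2_weighted (by linarith) (by linarith)
      (by positivity) (by positivity) (by ring)

/-- The difference of the two sides is antitone on `(0, 1]` and vanishes at `1`: its derivative is
`p (1 - ((p-1) x^(p-2) + (2-p) x^(p-1)))`, which is nonpositive by weighted AM-GM. -/
lemma mul_rpow_sub_one_add_mul_rpow_le {p t : ℝ} (hp1 : 1 ≤ p) (hp2 : p ≤ 2) (ht0 : 0 < t)
    (ht1 : t ≤ 1) : p * t ^ (p - 1) + (2 - p) * t ^ p ≤ p * t + (2 - p) := by
  set g : ℝ → ℝ := fun x ↦ p * x + (2 - p) - (p * x ^ (p - 1) + (2 - p) * x ^ p) with hg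
  have hg' : ∀ x, 0 < x →
      HasDerivAt g (p * (1 - ((p - 1) * x ^ (p - 2) + (2 - p) * x ^ (p - 1)))) x := by
    intro x hx
    have := (((hasDerivAt_id x).const_mul p).add_const (2 - p)).sub
      (((hasDerivAt_rpow_const (p := p - 1) (Or.inl hx.ne')).const_mul p).add
        ((hasDerivAt_rpow_const (p := p) (Or.inl hx.ne')).const_mul (2 - p)))
    rw [show p - 1 - 1 = p - 2 by ring] at this
    exact this.congr_deriv (by ring)
  have hanti : AntitoneOn g (Ioc 0 1) := by
    refine antitoneOn_of_hasDerivWithinAt_nonpos (convex_Ioc 0 1)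
      (fun x hx ↦ (hg' x hx.1).continuousAt.continuousWithinAt)
      (fun x hx ↦ (hg' x (interior_subset hx).1).hasDerivWithinAt) fun x hx ↦ ?_
    have := one_le_weighted_rpow_add hp1 hp2 (interior_subset hx).1
    nlinarith
  have := hanti ⟨ht0, ht1⟩ ⟨one_pos, le_rfl⟩ ht1
  simp only [hg, one_rpow] at this
  linarith

lemma weighted_rpow_sq_eq_of_system {p μ β τ : ℝ} (hτ : 0 < τ)
    (h1 : p * τ ^ (2 * p - 2) - 2 * β * τ ^ p = μ * (2 - p))
    (h2 : μ + β * τ ^ p - β * τ ^ (p - 2) - τ ^ (2 * p - 2) = 0) :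
    p * (τ ^ 2) ^ (p - 1) + (2 - p) * (τ ^ 2) ^ p = μ * ((2 - p) + p * τ ^ 2) := by
  have hsplit : τ ^ (2 * p - 2) = τ ^ p * τ ^ (p - 2) := by
    rw [← rpow_add hτ]; ring_nf
  have hshift : τ ^ p = τ ^ (p - 2) * τ ^ 2 := by
    rw [← rpow_natCast, ← rpow_add hτ]; push_cast; ring_nf
  have hsq_sub_one : (τ ^ 2) ^ (p - 1) = τ ^ p * τ ^ (p - 2) := by
    rw [← rpow_natCast_mul hτ.le, ← rpow_add hτ]; push_cast; ring_nf
  have hsq : (τ ^ 2) ^ p = τ ^ p * τ ^ p := by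
    rw [← rpow_natCast_mul hτ.le, ← rpow_add hτ]; push_cast; ring_nf
  rw [hsplit] at h1 h2
  rw [hsq_sub_one, hsq]
  linear_combination (1 - τ ^ 2) * h1 - 2 * τ ^ 2 * h2 + (2 * β + (2 - p) * τ ^ p) * hshift

theorem no_solution_B5_general (p μ β : ℝ) (hp1 : 1 < p) (hp2 : p < 2)
    (hμ1 : 1 < μ) :
    ¬ ∃ τ : ℝ, 0 < τ ∧ τ < 1 ∧
      p * τ ^ (2 * p - 2) - 2 * β * τ ^ p = μ * (2 - p) ∧
      μ + β * τ ^ p - β * τ ^ (p - 2) - τ ^ (2 * p - 2) = 0 := by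
  rintro ⟨τ, hτ0, hτ1, h1, h2⟩
  have hid := weighted_rpow_sq_eq_of_system hτ0 h1 h2
  have hle := mul_rpow_sub_one_add_mul_rpow_le hp1.le hp2.le (pow_pos hτ0 2) (by nlinarith)
  have hpos : 0 < (2 - p) + p * τ ^ 2 := by nlinarith
  have : μ * ((2 - p) + p * τ ^ 2) ≤ 1 * ((2 - p) + p * τ ^ 2) := by linarith
  exact absurd (le_of_mul_le_mul_right this hpos) (not_le.2 hμ1)

/-- Case (B5): for `1 < p < 2`, `1 < μ < p/(2-p)` and
`0 < β̃ ≤ min{(p - μ(2-p))/2, 2(p-1)(2-p)^{(2-p)/(2(p-1))}(μ/p)^{p/(2(p-1))}}`,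
the system `p·τ^{2p-2} - 2β̃·τ^p = μ(2-p)`, `μ + β̃·τ^p - β̃·τ^{p-2} - τ^{2p-2} = 0`
has no solution `τ ∈ (0, 1)`. -/
theorem no_solution_B5 (p μ β : ℝ) (hp1 : 1 < p) (hp2 : p < 2)
    (hμ1 : 1 < μ) (hμ2 : μ < p / (2 - p)) (hβ0 : 0 < β)
    (hβ : β ≤ min ((p - μ * (2 - p)) / 2)
      (2 * (p - 1) * (2 - p) ^ ((2 - p) / (2 * (p - 1))) * (μ / p) ^ (p / (2 * (p - 1))))) :
    ¬ ∃ τ : ℝ, 0 < τ ∧ τ < 1 ∧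
      p * τ ^ (2 * p - 2) - 2 * β * τ ^ p = μ * (2 - p) ∧
      μ + β * τ ^ p - β * τ ^ (p - 2) - τ ^ (2 * p - 2) = 0 :=
  no_solution_B5_general p μ β hp1 hp2 hμ1
end

section
/- Let 1 < p < 2 and μ > 1 be real numbers, and let β̃ satisfy max{ (p − μ(2−p))/2 , 0 } < β̃ < (p−1)·μ^{(p−2)/(2(p−1))}. Then there is no real number τ ∈ (0, 1) satisfying simultaneously p·τ^{2p−2} − 2β̃·τ^p = μ(2−p) and μ + β̃·τ^p − β̃·τ^{p−2} − τ^{2p−2} = 0. -/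
/-!
Eliminating `β̃` from the two equations leaves
`μ (p τ^p + (2−p) τ^{p−2}) = τ^{2p−2} ((2−p) τ^p + p τ^{p−2})`.
Dividing by `τ^{p−2}` and writing `s = τ²`, the right-hand side is smaller than the bracket on the
left because `p s^{p−1} + (2−p) s^p < p s + (2−p)` on `(0, 1)`: the difference vanishes at `s = 1`
and has derivative `p (1 − (2−p) s^{p−1} − (p−1) s^{p−2}) < 0` by the strict weighted AM–GM
(Bernoulli) inequality. Hence `μ < 1`.
-/

open Real Set

theorem one_lt_weighted_rpow_add_rpow {p s : ℝ} (hp1 : 1 < p) (hp2 : p < 2)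
    (hs0 : 0 < s) (hs1 : s < 1) :
    1 < (2 - p) * s ^ (p - 1) + (p - 1) * s ^ (p - 2) := by
  have bernoulli : s ^ (2 - p) < (2 - p) * s + (p - 1) := by
    have := rpow_one_add_lt_one_add_mul_self (s := s - 1) (by linarith) (by linarith)
      (p := 2 - p) (by linarith) (by linarith)
    rw [add_sub_cancel] at this
    linarith
  refine lt_of_mul_lt_mul_right ?_ (rpow_pos_of_pos hs0 (2 - p)).le
  calc 1 * s ^ (2 - p) = s ^ (2 - p) := one_mul _
    _ < (2 - p) * s + (p - 1) := bernoulli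
    _ = ((2 - p) * s ^ (p - 1) + (p - 1) * s ^ (p - 2)) * s ^ (2 - p) := by
      rw [add_mul, mul_assoc, mul_assoc, ← rpow_add hs0, ← rpow_add hs0]
      norm_num

theorem strictAntiOn_rpow_combination {p : ℝ} (hp1 : 1 < p) (hp2 : p < 2) :
    StrictAntiOn (fun s : ℝ ↦ p * s + (2 - p) - (2 - p) * s ^ p - p * s ^ (p - 1)) (Ioc 0 1) := by
  have hd {s : ℝ} (hs0 : 0 < s) :
      HasDerivAt (fun s : ℝ ↦ p * s + (2 - p) - (2 - p) * s ^ p - p * s ^ (p - 1))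
        (p * (1 - ((2 - p) * s ^ (p - 1) + (p - 1) * s ^ (p - 2)))) s := by
    have hpow (r : ℝ) : HasDerivAt (fun s : ℝ ↦ s ^ r) (r * s ^ (r - 1)) s :=
      hasDerivAt_rpow_const (Or.inl hs0.ne')
    refine ((((hasDerivAt_id s).const_mul p).add_const (2 - p)).sub
      ((hpow p).const_mul (2 - p))).sub ((hpow (p - 1)).const_mul p) |>.congr_deriv ?_
    rw [show p - 1 - 1 = p - 2 by ring]
    ring
  refine strictAntiOn_of_deriv_neg (convex_Ioc 0 1)
    (fun s hs ↦ (hd hs.1).continuousAt.continuousWithinAt) fun s hs ↦ ?_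
  rw [interior_Ioc] at hs
  rw [(hd hs.1).deriv]
  have := one_lt_weighted_rpow_add_rpow hp1 hp2 hs.1 hs.2
  exact mul_neg_of_pos_of_neg (by linarith) (by linarith)

theorem rpow_combination_lt {p s : ℝ} (hp1 : 1 < p) (hp2 : p < 2) (hs0 : 0 < s) (hs1 : s < 1) :
    p * s ^ (p - 1) + (2 - p) * s ^ p < p * s + (2 - p) := by
  have := strictAntiOn_rpow_combination hp1 hp2 ⟨hs0, hs1.le⟩ ⟨one_pos, le_rfl⟩ hs1
  simp only [one_rpow, mul_one] at this
  linarith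

theorem rpow_two_mul_sub_two_mul_lt {p τ : ℝ} (hp1 : 1 < p) (hp2 : p < 2) (hτ0 : 0 < τ)
    (hτ1 : τ < 1) :
    τ ^ (2 * p - 2) * ((2 - p) * τ ^ p + p * τ ^ (p - 2)) < p * τ ^ p + (2 - p) * τ ^ (p - 2) := by
  have hs := rpow_combination_lt hp1 hp2 (rpow_pos_of_pos hτ0 2)
    (rpow_lt_one hτ0.le hτ1 two_pos)
  rw [← rpow_mul hτ0.le, ← rpow_mul hτ0.le] at hs
  have hmul := mul_lt_mul_of_pos_right hs (rpow_pos_of_pos hτ0 (p - 2))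
  have hexp (a b c : ℝ) (h : a + b = c) : τ ^ a * τ ^ b = τ ^ c := by rw [← rpow_add hτ0, h]
  have e1 : τ ^ (2 * (p - 1)) * τ ^ (p - 2) = τ ^ (2 * p - 2) * τ ^ (p - 2) := by ring_nf
  have e2 : τ ^ (2 * p) * τ ^ (p - 2) = τ ^ (2 * p - 2) * τ ^ p := by
    rw [hexp _ _ (3 * p - 2) (by ring), hexp _ _ (3 * p - 2) (by ring)]
  have e3 : τ ^ (2 : ℝ) * τ ^ (p - 2) = τ ^ p := hexp _ _ _ (by ring)
  linear_combination hmul - p * e1 - (2 - p) * e2 + p * e3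

theorem no_solution_B6_general (p μ β : ℝ) (hp1 : 1 < p) (hp2 : p < 2) (hμ : 1 < μ) :
    ¬ ∃ τ : ℝ, 0 < τ ∧ τ < 1 ∧
      p * τ ^ (2 * p - 2) - 2 * β * τ ^ p = μ * (2 - p) ∧
      μ + β * τ ^ p - β * τ ^ (p - 2) - τ ^ (2 * p - 2) = 0 := by
  rintro ⟨τ, hτ0, hτ1, h1, h2⟩
  have eliminate_β : μ * (p * τ ^ p + (2 - p) * τ ^ (p - 2)) =
      τ ^ (2 * p - 2) * ((2 - p) * τ ^ p + p * τ ^ (p - 2)) := by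
    linear_combination 2 * τ ^ p * h2 + (τ ^ p - τ ^ (p - 2)) * h1
  have hlt := rpow_two_mul_sub_two_mul_lt hp1 hp2 hτ0 hτ1
  have hpos : 0 < p * τ ^ p + (2 - p) * τ ^ (p - 2) :=
    add_pos (mul_pos (by linarith) (rpow_pos_of_pos hτ0 p))
      (mul_pos (by linarith) (rpow_pos_of_pos hτ0 (p - 2)))
  linarith [mul_lt_mul_of_pos_right hμ hpos]

/-- Case (B6): for `1 < p < 2`, `μ > 1` and
`max{(p - μ(2-p))/2, 0} < β̃ < (p-1)μ^{(p-2)/(2(p-1))}`,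
the system `p·τ^{2p-2} - 2β̃·τ^p = μ(2-p)`, `μ + β̃·τ^p - β̃·τ^{p-2} - τ^{2p-2} = 0`
has no solution `τ ∈ (0, 1)`. -/
theorem no_solution_B6 (p μ β : ℝ) (hp1 : 1 < p) (hp2 : p < 2) (hμ : 1 < μ)
    (hβ1 : max ((p - μ * (2 - p)) / 2) 0 < β)
    (hβ2 : β < (p - 1) * μ ^ ((p - 2) / (2 * (p - 1)))) :
    ¬ ∃ τ : ℝ, 0 < τ ∧ τ < 1 ∧
      p * τ ^ (2 * p - 2) - 2 * β * τ ^ p = μ * (2 - p) ∧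
      μ + β * τ ^ p - β * τ ^ (p - 2) - τ ^ (2 * p - 2) = 0 :=
  no_solution_B6_general p μ β hp1 hp2 hμ
end

section
/- Let p > 1 and μ > 1 be real numbers, let β̃ < 0, and let τ > 0 satisfy μ + β̃·τ^p − τ^{2p−2} − β̃·τ^{p−2} = 0 together with μ + β̃·τ^p > 0 and τ^{2p−2} + β̃·τ^{p−2} > 0. Then max{ 1 , |β̃|^{1/p} } < τ < min{ (μ/|β̃|)^{1/p} , μ^{1/(2(p−1))} }. -/
/-- For `p > 1`, `μ > 1`, `β̃ < 0` and `τ > 0` with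
`μ + β̃τ^p - τ^{2p-2} - β̃τ^{p-2} = 0`, `μ + β̃τ^p > 0` and `τ^{2p-2} + β̃τ^{p-2} > 0`,
one has `max{1, |β̃|^{1/p}} < τ < min{(μ/|β̃|)^{1/p}, μ^{1/(2(p-1))}}`. -/
theorem tau_bounds (p μ β τ : ℝ) (hp : 1 < p) (hμ : 1 < μ) (hβ : β < 0) (hτ : 0 < τ)
    (heq : μ + β * τ ^ p - τ ^ (2 * p - 2) - β * τ ^ (p - 2) = 0)
    (h1 : 0 < μ + β * τ ^ p)
    (h2 : 0 < τ ^ (2 * p - 2) + β * τ ^ (p - 2)) :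
    max 1 (|β| ^ (1 / p)) < τ ∧
      τ < min ((μ / |β|) ^ (1 / p)) (μ ^ (1 / (2 * (p - 1)))) := by
  have hb : (0:ℝ) < -β := neg_pos.2 hβ
  have habs : |β| = -β := abs_of_neg hβ
  have hτp : 0 < τ ^ p := Real.rpow_pos_of_pos hτ p
  have hτp2 : 0 < τ ^ (p - 2) := Real.rpow_pos_of_pos hτ (p - 2)
  have hτ2 : 0 < τ ^ (2:ℝ) := Real.rpow_pos_of_pos hτ 2
  have e1 : τ ^ (2 * p - 2) = τ ^ p * τ ^ (p - 2) := by
    rw [← Real.rpow_add hτ]; ring_nf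
  have e2 : τ ^ p = τ ^ (p - 2) * τ ^ (2:ℝ) := by
    rw [← Real.rpow_add hτ]; ring_nf
  -- Key identity: μ = τ^{2p-2} + βτ^{p-2}(1 - τ²)
  have hμeq : μ = τ ^ (2 * p - 2) + β * τ ^ (p - 2) * (1 - τ ^ (2:ℝ)) := by
    rw [e2] at heq; linear_combination heq
  -- Step A : -β < τ^p
  have hA : -β < τ ^ p := by
    by_contra hcon
    push_neg at hcon
    have hnonpos : (τ ^ p + β) * τ ^ (p - 2) ≤ 0 :=
      mul_nonpos_of_nonpos_of_nonneg (by linarith) hτp2.le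
    rw [e1] at h2; nlinarith
  -- Step B : 1 < τ
  have hB : 1 < τ := by
    by_contra hcon
    push_neg at hcon
    have h2le : τ ^ (2:ℝ) ≤ 1 := Real.rpow_le_one hτ.le hcon (by norm_num)
    have h2ple : τ ^ (2 * p - 2) ≤ 1 :=
      Real.rpow_le_one hτ.le hcon (by linarith)
    have hsgn : β * (τ ^ (p - 2) * (1 - τ ^ (2:ℝ))) ≤ 0 :=
      mul_nonpos_of_nonpos_of_nonneg hβ.le (mul_nonneg hτp2.le (by linarith))
    nlinarith
  -- Step C : τ^{2p-2} < μ
  have hτ2gt : (1:ℝ) < τ ^ (2:ℝ) :=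
    Real.one_lt_rpow_iff_of_pos hτ |>.mpr (Or.inl ⟨hB, by norm_num⟩)
  have hC : τ ^ (2 * p - 2) < μ := by
    have hsgn : 0 < β * (τ ^ (p - 2) * (1 - τ ^ (2:ℝ))) :=
      mul_pos_of_neg_of_neg hβ (mul_neg_of_pos_of_neg hτp2 (by linarith))
    nlinarith
  -- assemble
  have hp0 : 0 < 1 / p := by positivity
  have hid : (τ ^ p) ^ (1 / p) = τ := by
    rw [← Real.rpow_mul hτ.le, mul_one_div, div_self (by linarith : p ≠ 0),
      Real.rpow_one]
  refine ⟨max_lt hB ?_, lt_min ?_ ?_⟩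
  · calc |β| ^ (1 / p) < (τ ^ p) ^ (1 / p) := by
          apply Real.rpow_lt_rpow (abs_nonneg β) _ hp0
          rw [habs]; exact hA
        _ = τ := hid
  · have hlt : τ ^ p < μ / |β| := by
      rw [habs, lt_div_iff₀ hb]; nlinarith
    calc τ = (τ ^ p) ^ (1 / p) := hid.symm
      _ < (μ / |β|) ^ (1 / p) := Real.rpow_lt_rpow hτp.le hlt hp0
  · have hq0 : 0 < 1 / (2 * (p - 1)) := by
      apply div_pos one_pos; linarith
    have hne : 2 * (p - 1) ≠ 0 := ne_of_gt (by linarith)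
    have hid2 : (τ ^ (2 * p - 2)) ^ (1 / (2 * (p - 1))) = τ := by
      rw [← Real.rpow_mul hτ.le,
        show (2 * p - 2) = 2 * (p - 1) by ring, mul_one_div, div_self hne,
        Real.rpow_one]
    calc τ = (τ ^ (2 * p - 2)) ^ (1 / (2 * (p - 1))) := hid2.symm
      _ < μ ^ (1 / (2 * (p - 1))) :=
        Real.rpow_lt_rpow (Real.rpow_pos_of_pos hτ _).le hC hq0
end

section
/- Let p > 1 and μ > 1 be real numbers, let β̃ < 0, and let τ > 0 satisfy μ + β̃·τ^p − τ^{2p−2} − β̃·τ^{p−2} = 0 together with μ + β̃·τ^p > 0 and τ^{2p−2} + β̃·τ^{p−2} > 0. Then (β̃² − μ(p−1))·τ^p − (β̃² + μ(p−1))·τ^{p−2} + 2μβ̃ < 0. -/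
/-- For `p > 1`, `μ > 1`, `β̃ < 0` and `τ > 0` with
`μ + β̃τ^p - τ^{2p-2} - β̃τ^{p-2} = 0`, `μ + β̃τ^p > 0` and `τ^{2p-2} + β̃τ^{p-2} > 0`,
one has `(β̃² - μ(p-1))τ^p - (β̃² + μ(p-1))τ^{p-2} + 2μβ̃ < 0`. -/
theorem numerator_negative (p μ β τ : ℝ) (hp : 1 < p) (hμ : 1 < μ) (hβ : β < 0) (hτ : 0 < τ)
    (heq : μ + β * τ ^ p - τ ^ (2 * p - 2) - β * τ ^ (p - 2) = 0)
    (h1 : 0 < μ + β * τ ^ p)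
    (h2 : 0 < τ ^ (2 * p - 2) + β * τ ^ (p - 2)) :
    (β ^ 2 - μ * (p - 1)) * τ ^ p - (β ^ 2 + μ * (p - 1)) * τ ^ (p - 2) + 2 * μ * β < 0 := by
  have hc : τ ^ (2 * p - 2) = τ ^ p * τ ^ (p - 2) := by
    rw [← Real.rpow_add hτ]; ring_nf
  have ht1 : 1 ≤ τ := by
    by_contra h
    push_neg at h
    have hlt : τ ^ (2 * p - 2) < 1 :=
      Real.rpow_lt_one hτ.le h (by linarith)
    have hab : τ ^ p < τ ^ (p - 2) :=
      Real.rpow_lt_rpow_of_exponent_gt hτ h (by linarith)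
    nlinarith [mul_neg_of_neg_of_pos hβ (sub_pos.mpr hab)]
  have ha : 0 < τ ^ p := Real.rpow_pos_of_pos hτ p
  have hb : 0 < τ ^ (p - 2) := Real.rpow_pos_of_pos hτ (p - 2)
  have hba : τ ^ (p - 2) ≤ τ ^ p :=
    Real.rpow_le_rpow_of_exponent_le ht1 (by linarith)
  have hmu : μ = τ ^ p * τ ^ (p - 2) - β * (τ ^ p - τ ^ (p - 2)) := by
    rw [hc] at heq; linarith
  nlinarith [mul_pos (mul_pos (sub_pos.mpr hp) (add_pos ha hb)) (lt_trans one_pos hμ),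
    mul_nonneg (sq_nonneg β) (sub_nonneg.mpr hba),
    mul_neg_of_neg_of_pos hβ (mul_pos ha hb)]
end

section
/- Let μ₁ > μ₂ > 0, β > 0 and p > 1 be real numbers, and set g(τ) = μ₁ + β·τ^p − μ₂·τ^{2p−2} − β·τ^{p−2} for τ > 0. Then: (i) if 1 < p < 2, there exists τ₀ ∈ (0, 1) with g(τ₀) = 0; (ii) if p > 2, there exists τ₀ ∈ (1, +∞) with g(τ₀) = 0; (iii) if p = 2 and either 0 < β < μ₂ or β > μ₁, there exists τ₀ ∈ (0, +∞) with g(τ₀) = 0. In each case the point τ₀ moreover satisfies μ₁ + β·τ₀^p > 0 and μ₂·τ₀^{2p−2} + β·τ₀^{p−2} > 0. -/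
/-- Solvability of the proportionality equation `g(τ) = μ₁ + βτ^p - μ₂τ^{2p-2} - βτ^{p-2} = 0`
for `β > 0`: (i) if `1 < p < 2` there is a root `τ₀ ∈ (0,1)`; (ii) if `p > 2` there is a root
`τ₀ ∈ (1,∞)`; (iii) if `p = 2` and `0 < β < μ₂` or `β > μ₁`, there is a root `τ₀ ∈ (0,∞)`.
In each case `μ₁ + βτ₀^p > 0` and `μ₂τ₀^{2p-2} + βτ₀^{p-2} > 0`. -/
theorem g_has_root_beta_pos (p μ₁ μ₂ β : ℝ) (h12 : μ₂ < μ₁) (hμ₂ : 0 < μ₂)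
    (hβ : 0 < β) (hp : 1 < p)
    (g : ℝ → ℝ)
    (hg : ∀ τ > 0, g τ = μ₁ + β * τ ^ p - μ₂ * τ ^ (2 * p - 2) - β * τ ^ (p - 2)) :
    (p < 2 → ∃ τ₀ : ℝ, 0 < τ₀ ∧ τ₀ < 1 ∧ g τ₀ = 0 ∧
      0 < μ₁ + β * τ₀ ^ p ∧ 0 < μ₂ * τ₀ ^ (2 * p - 2) + β * τ₀ ^ (p - 2)) ∧
    (2 < p → ∃ τ₀ : ℝ, 1 < τ₀ ∧ g τ₀ = 0 ∧
      0 < μ₁ + β * τ₀ ^ p ∧ 0 < μ₂ * τ₀ ^ (2 * p - 2) + β * τ₀ ^ (p - 2)) ∧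
    (p = 2 ∧ (β < μ₂ ∨ μ₁ < β) → ∃ τ₀ : ℝ, 0 < τ₀ ∧ g τ₀ = 0 ∧
      0 < μ₁ + β * τ₀ ^ p ∧ 0 < μ₂ * τ₀ ^ (2 * p - 2) + β * τ₀ ^ (p - 2)) := by
  have hμ₁ : 0 < μ₁ := hμ₂.trans h12
  set F : ℝ → ℝ := fun τ => μ₁ + β * τ ^ p - μ₂ * τ ^ (2 * p - 2) - β * τ ^ (p - 2) with hF
  have hpos : ∀ τ : ℝ, 0 < τ → 0 < μ₁ + β * τ ^ p ∧
      0 < μ₂ * τ ^ (2 * p - 2) + β * τ ^ (p - 2) := by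
    intro τ hτ
    constructor
    · have := Real.rpow_pos_of_pos hτ p
      nlinarith
    · have h1 := Real.rpow_pos_of_pos hτ (2 * p - 2)
      have h2 := Real.rpow_pos_of_pos hτ (p - 2)
      nlinarith
  have hcont : ∀ a b : ℝ, 0 < a → ContinuousOn F (Set.Icc a b) := by
    intro a b ha
    have h1 : ContinuousOn (fun x : ℝ => x ^ p) (Set.Icc a b) :=
      continuousOn_id.rpow_const (fun x hx => Or.inl (ne_of_gt (ha.trans_le hx.1)))
    have h2 : ContinuousOn (fun x : ℝ => x ^ (2 * p - 2)) (Set.Icc a b) :=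
      continuousOn_id.rpow_const (fun x hx => Or.inl (ne_of_gt (ha.trans_le hx.1)))
    have h3 : ContinuousOn (fun x : ℝ => x ^ (p - 2)) (Set.Icc a b) :=
      continuousOn_id.rpow_const (fun x hx => Or.inl (ne_of_gt (ha.trans_le hx.1)))
    exact (((continuousOn_const.add (continuousOn_const.mul h1)).sub
      (continuousOn_const.mul h2)).sub (continuousOn_const.mul h3))
  have hF1 : F 1 = μ₁ - μ₂ := by
    simp [hF, Real.one_rpow]
    ring
  refine ⟨?_, ?_, ?_⟩
  · -- case 1 < p < 2
    intro hp2
    obtain ⟨M, hM1, hMβ⟩ : ∃ M : ℝ, 1 < M ∧ β * M = μ₁ + 2 * β :=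
      ⟨(μ₁ + β) / β + 1, by
        constructor
        · have : 0 < (μ₁ + β) / β := div_pos (by linarith) hβ
          linarith
        · field_simp; try ring⟩
    have hMpos : 0 < M := by linarith
    obtain ⟨a, ha0, haM, ha1⟩ : ∃ a : ℝ, 0 < a ∧ a ^ (p - 2) = M ∧ a < 1 := by
      refine ⟨M ^ (1 / (p - 2)), Real.rpow_pos_of_pos hMpos _, ?_, ?_⟩
      · rw [← Real.rpow_mul hMpos.le, one_div,
          inv_mul_cancel₀ (by nlinarith : p - 2 ≠ 0), Real.rpow_one]
      · exact Real.rpow_lt_one_of_one_lt_of_neg hM1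
          (div_neg_of_pos_of_neg one_pos (by linarith))
    have hFa : F a < 0 := by
      have hap : a ^ p ≤ 1 := Real.rpow_le_one ha0.le ha1.le (by linarith)
      have h2p : 0 < a ^ (2 * p - 2) := Real.rpow_pos_of_pos ha0 _
      rw [hF]
      simp only
      rw [haM]
      nlinarith
    have hF1' : 0 < F 1 := by rw [hF1]; linarith
    have hsub : Set.Icc (F a) (F 1) ⊆ F '' Set.Icc a 1 :=
      intermediate_value_Icc ha1.le (hcont a 1 ha0)
    obtain ⟨τ₀, hτ₀mem, hτ₀⟩ := hsub ⟨hFa.le, hF1'.le⟩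
    have hτ₀a : a < τ₀ := lt_of_le_of_ne hτ₀mem.1 (fun h => by rw [← h] at hτ₀; linarith)
    have hτ₀1 : τ₀ < 1 := lt_of_le_of_ne hτ₀mem.2 (fun h => by rw [h] at hτ₀; linarith)
    have hτ₀pos : 0 < τ₀ := ha0.trans hτ₀a
    obtain ⟨hA, hB⟩ := hpos τ₀ hτ₀pos
    exact ⟨τ₀, hτ₀pos, hτ₀1, by rw [hg τ₀ hτ₀pos]; exact hτ₀, hA, hB⟩
  · -- case p > 2
    intro hp2
    obtain ⟨M, hM1, hMμ⟩ : ∃ M : ℝ, 1 < M ∧ μ₂ * M = β + μ₁ + μ₂ :=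
      ⟨(β + μ₁) / μ₂ + 1, by
        constructor
        · have : 0 < (β + μ₁) / μ₂ := div_pos (by linarith) hμ₂
          linarith
        · field_simp; try ring⟩
    have hMpos : 0 < M := by linarith
    obtain ⟨b, hb1, hbM⟩ : ∃ b : ℝ, 1 < b ∧ b ^ (p - 2) = M := by
      refine ⟨M ^ (1 / (p - 2)), ?_, ?_⟩
      · exact Real.one_lt_rpow_iff_of_pos hMpos |>.2
          (Or.inl ⟨hM1, div_pos one_pos (by linarith)⟩)
      · rw [← Real.rpow_mul hMpos.le, one_div,
          inv_mul_cancel₀ (by nlinarith : p - 2 ≠ 0), Real.rpow_one]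
    have hb0 : 0 < b := by linarith
    have hbp : 1 ≤ b ^ p := Real.one_le_rpow hb1.le (by linarith)
    have hFb : F b < 0 := by
      have hsplit : b ^ (2 * p - 2) = b ^ p * b ^ (p - 2) := by
        rw [← Real.rpow_add hb0]; ring_nf
      have hpm2 : 0 < b ^ (p - 2) := Real.rpow_pos_of_pos hb0 _
      rw [hF]
      simp only
      rw [hsplit, hbM]
      have hneg : β - μ₂ * M ≤ -(μ₁ + μ₂) := by linarith
      have hkey : b ^ p * (β - μ₂ * M) ≤ 1 * (β - μ₂ * M) :=
        mul_le_mul_of_nonpos_right hbp (by linarith)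
      nlinarith
    have hF1' : 0 < F 1 := by rw [hF1]; linarith
    have hsub : Set.Icc (F b) (F 1) ⊆ F '' Set.Icc 1 b :=
      intermediate_value_Icc' hb1.le (hcont 1 b one_pos)
    obtain ⟨τ₀, hτ₀mem, hτ₀⟩ := hsub ⟨hFb.le, hF1'.le⟩
    have hτ₀1 : 1 < τ₀ := lt_of_le_of_ne hτ₀mem.1 (fun h => by rw [← h] at hτ₀; linarith)
    have hτ₀pos : 0 < τ₀ := by linarith
    obtain ⟨hA, hB⟩ := hpos τ₀ hτ₀pos
    exact ⟨τ₀, hτ₀1, by rw [hg τ₀ hτ₀pos]; exact hτ₀, hA, hB⟩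
  · -- case p = 2
    rintro ⟨hp2, hcase⟩
    subst hp2
    have hratio : 0 < (β - μ₁) / (β - μ₂) := by
      rcases hcase with h | h
      · exact div_pos_of_neg_of_neg (by linarith) (by linarith)
      · exact div_pos (by linarith) (by linarith)
    set τ₀ : ℝ := Real.sqrt ((β - μ₁) / (β - μ₂)) with hτdef
    have hτpos : 0 < τ₀ := Real.sqrt_pos.2 hratio
    have hτsq : τ₀ ^ (2:ℕ) = (β - μ₁) / (β - μ₂) := Real.sq_sqrt hratio.le
    have hne : β - μ₂ ≠ 0 := by rcases hcase with h | h <;> [linarith; nlinarith]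
    have hprod : (β - μ₂) * τ₀ ^ (2:ℕ) = β - μ₁ := by
      rw [hτsq]; field_simp
    have hgτ : g τ₀ = 0 := by
      rw [hg τ₀ hτpos]
      have e1 : τ₀ ^ (2:ℝ) = τ₀ ^ (2:ℕ) := by
        rw [← Real.rpow_natCast]; norm_num
      have e2 : (2:ℝ) * 2 - 2 = 2 := by norm_num
      have e3 : (2:ℝ) - 2 = 0 := by norm_num
      rw [e2, e3, Real.rpow_zero, e1]
      nlinarith [hprod]
    obtain ⟨hA, hB⟩ := hpos τ₀ hτpos
    exact ⟨τ₀, hτpos, hgτ, hA, hB⟩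
end

section
/- Let μ₁ > μ₂ > 0 and p > 1 be real numbers, let β satisfy −√(μ₁μ₂) < β < 0, and set g(τ) = μ₁ + β·τ^p − μ₂·τ^{2p−2} − β·τ^{p−2} for τ > 0. Then there exists τ₀ with (|β|/μ₂)^{1/p} < τ₀ < (μ₁/|β|)^{1/p} such that g(τ₀) = 0, μ₁ + β·τ₀^p > 0 and μ₂·τ₀^{2p−2} + β·τ₀^{p−2} > 0. -/
/-!
Write `s = τ^p`, so that `g(τ) = (μ₁ + βs) - τ^{p-2} (μ₂s + β)`. At `a = (|β|/μ₂)^{1/p}` the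
second factor vanishes and `g(a) = μ₁ - β²/μ₂ > 0`; at `b = (μ₁/|β|)^{1/p}` the first one vanishes
and `g(b) = -b^{p-2} (μ₁μ₂ - β²)/|β| < 0`, both signs coming from `β² < μ₁μ₂`. The intermediate
value theorem gives a root in `(a, b)`, and there both factors are positive because `s` lies
strictly between `|β|/μ₂` and `μ₁/|β|`.
-/

open Real Set

noncomputable def proportionalityFn (μ₁ μ₂ β p τ : ℝ) : ℝ :=
  μ₁ + β * τ ^ p - μ₂ * τ ^ (2 * p - 2) - β * τ ^ (p - 2)

section

variable {μ₁ μ₂ β p τ : ℝ}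

lemma mul_rpow_two_mul_sub_two_add (hτ : 0 < τ) :
    μ₂ * τ ^ (2 * p - 2) + β * τ ^ (p - 2) = τ ^ (p - 2) * (μ₂ * τ ^ p + β) := by
  have hsplit : τ ^ (2 * p - 2) = τ ^ p * τ ^ (p - 2) := by
    rw [← rpow_add hτ]
    ring_nf
  rw [hsplit]
  ring

lemma proportionalityFn_eq (hτ : 0 < τ) :
    proportionalityFn μ₁ μ₂ β p τ = (μ₁ + β * τ ^ p) - τ ^ (p - 2) * (μ₂ * τ ^ p + β) := by
  rw [← mul_rpow_two_mul_sub_two_add hτ, proportionalityFn]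
  ring

lemma continuousOn_proportionalityFn : ContinuousOn (proportionalityFn μ₁ μ₂ β p) (Ioi 0) := by
  have hpow (r : ℝ) : ContinuousOn (fun τ : ℝ => τ ^ r) (Ioi 0) :=
    continuousOn_id.rpow_const fun τ hτ => Or.inl (ne_of_gt hτ)
  exact (((continuousOn_const.add (continuousOn_const.mul (hpow p))).sub
    (continuousOn_const.mul (hpow _))).sub (continuousOn_const.mul (hpow _)))

lemma proportionalityFn_pos_of_eq_zero (hμ₂ : 0 < μ₂) (hβ : β ^ 2 < μ₁ * μ₂) (hτ : 0 < τ)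
    (h : μ₂ * τ ^ p + β = 0) : 0 < proportionalityFn μ₁ μ₂ β p τ := by
  rw [proportionalityFn_eq hτ, h, mul_zero, sub_zero]
  have key : μ₂ * (μ₁ + β * τ ^ p) = μ₁ * μ₂ - β ^ 2 := by linear_combination β * h
  exact pos_of_mul_pos_right (by rw [key]; linarith) hμ₂.le

lemma proportionalityFn_neg_of_eq_zero (hβ₀ : β < 0) (hβ : β ^ 2 < μ₁ * μ₂) (hτ : 0 < τ)
    (h : μ₁ + β * τ ^ p = 0) : proportionalityFn μ₁ μ₂ β p τ < 0 := by
  rw [proportionalityFn_eq hτ, h, zero_sub, neg_lt_zero]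
  have key : -β * (μ₂ * τ ^ p + β) = μ₁ * μ₂ - β ^ 2 := by linear_combination (-μ₂) * h
  exact mul_pos (rpow_pos_of_pos hτ _) (pos_of_mul_pos_right (by rw [key]; linarith) (by linarith))

lemma mul_rpow_add_pos (hμ₂ : 0 < μ₂) (hβ₀ : β ≤ 0) (hp : 0 < p) (hτ : (-β / μ₂) ^ p⁻¹ < τ) :
    0 < μ₂ * τ ^ p + β := by
  have hbase : 0 ≤ -β / μ₂ := div_nonneg (neg_nonneg.2 hβ₀) hμ₂.le
  have hτ₀ : 0 ≤ τ := (rpow_nonneg hbase _).trans hτ.le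
  rw [rpow_inv_lt_iff_of_pos hbase hτ₀ hp, div_lt_iff₀' hμ₂] at hτ
  linarith

lemma add_mul_rpow_pos (hμ₁ : 0 ≤ μ₁) (hβ₀ : β < 0) (hp : 0 < p) (hτ₀ : 0 ≤ τ)
    (hτ : τ < (μ₁ / -β) ^ p⁻¹) : 0 < μ₁ + β * τ ^ p := by
  rw [lt_rpow_inv_iff_of_pos hτ₀ (div_nonneg hμ₁ (neg_nonneg.2 hβ₀.le)) hp,
    lt_div_iff₀ (neg_pos.2 hβ₀)] at hτ
  linarith

lemma exists_proportionalityFn_eq_zero (hμ₂ : 0 < μ₂) (hp : 0 < p) (hβ₀ : β < 0)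
    (hβ : β ^ 2 < μ₁ * μ₂) :
    ∃ τ ∈ Ioo ((-β / μ₂) ^ p⁻¹) ((μ₁ / -β) ^ p⁻¹), proportionalityFn μ₁ μ₂ β p τ = 0 := by
  have hμ₁ : 0 < μ₁ := pos_of_mul_pos_left ((sq_nonneg β).trans_lt hβ) hμ₂.le
  have hA : 0 < -β / μ₂ := div_pos (neg_pos.2 hβ₀) hμ₂
  have hB : 0 < μ₁ / -β := div_pos hμ₁ (neg_pos.2 hβ₀)
  set a := (-β / μ₂) ^ p⁻¹
  set b := (μ₁ / -β) ^ p⁻¹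
  have ha : 0 < a := rpow_pos_of_pos hA _
  have hb : 0 < b := rpow_pos_of_pos hB _
  have hap : μ₂ * a ^ p + β = 0 := by
    rw [rpow_inv_rpow hA.le hp.ne']
    field_simp
    ring
  have hbp : μ₁ + β * b ^ p = 0 := by
    rw [rpow_inv_rpow hB.le hp.ne']
    field_simp [hβ₀.ne]
    ring
  have hab : a < b := by
    refine rpow_lt_rpow hA.le ?_ (inv_pos.2 hp)
    rw [div_lt_div_iff₀ hμ₂ (neg_pos.2 hβ₀)]
    nlinarith
  exact intermediate_value_Ioo' hab.le
    (continuousOn_proportionalityFn.mono (Icc_subset_Ioi_iff hab.le |>.2 ha))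
    ⟨proportionalityFn_neg_of_eq_zero hβ₀ hβ hb hbp, proportionalityFn_pos_of_eq_zero hμ₂ hβ ha hap⟩

end

theorem g_has_root_beta_neg_general (p μ₁ μ₂ β : ℝ) (hμ₂ : 0 < μ₂) (hp : 1 < p)
    (hβ1 : -Real.sqrt (μ₁ * μ₂) < β) (hβ2 : β < 0)
    (g : ℝ → ℝ)
    (hg : ∀ τ > 0, g τ = μ₁ + β * τ ^ p - μ₂ * τ ^ (2 * p - 2) - β * τ ^ (p - 2)) :
    ∃ τ₀ : ℝ, (|β| / μ₂) ^ (1 / p) < τ₀ ∧ τ₀ < (μ₁ / |β|) ^ (1 / p) ∧ g τ₀ = 0 ∧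
      0 < μ₁ + β * τ₀ ^ p ∧ 0 < μ₂ * τ₀ ^ (2 * p - 2) + β * τ₀ ^ (p - 2) := by
  have hp₀ : 0 < p := by linarith
  have hβ : β ^ 2 < μ₁ * μ₂ := sq_lt.2 ⟨hβ1, hβ2.trans_le (sqrt_nonneg _)⟩
  have hμ₁ : 0 < μ₁ := pos_of_mul_pos_left ((sq_nonneg β).trans_lt hβ) hμ₂.le
  rw [abs_of_neg hβ2, one_div]
  obtain ⟨τ₀, ⟨haτ, hτb⟩, hroot⟩ := exists_proportionalityFn_eq_zero hμ₂ hp₀ hβ2 hβ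
  have hτ₀ : 0 < τ₀ := (rpow_nonneg (div_nonneg (neg_nonneg.2 hβ2.le) hμ₂.le) _).trans_lt haτ
  refine ⟨τ₀, haτ, hτb, (hg τ₀ hτ₀).trans hroot, add_mul_rpow_pos hμ₁.le hβ2 hp₀ hτ₀.le hτb, ?_⟩
  rw [mul_rpow_two_mul_sub_two_add hτ₀]
  exact mul_pos (rpow_pos_of_pos hτ₀ _) (mul_rpow_add_pos hμ₂ hβ2.le hp₀ haτ)

/-- Solvability of the proportionality equation for `-√(μ₁μ₂) < β < 0`: there exists
`τ₀` with `(|β|/μ₂)^{1/p} < τ₀ < (μ₁/|β|)^{1/p}` such that `g(τ₀) = 0`,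
`μ₁ + βτ₀^p > 0` and `μ₂τ₀^{2p-2} + βτ₀^{p-2} > 0`. -/
theorem g_has_root_beta_neg (p μ₁ μ₂ β : ℝ) (h12 : μ₂ < μ₁) (hμ₂ : 0 < μ₂) (hp : 1 < p)
    (hβ1 : -Real.sqrt (μ₁ * μ₂) < β) (hβ2 : β < 0)
    (g : ℝ → ℝ)
    (hg : ∀ τ > 0, g τ = μ₁ + β * τ ^ p - μ₂ * τ ^ (2 * p - 2) - β * τ ^ (p - 2)) :
    ∃ τ₀ : ℝ, (|β| / μ₂) ^ (1 / p) < τ₀ ∧ τ₀ < (μ₁ / |β|) ^ (1 / p) ∧ g τ₀ = 0 ∧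
      0 < μ₁ + β * τ₀ ^ p ∧ 0 < μ₂ * τ₀ ^ (2 * p - 2) + β * τ₀ ^ (p - 2) :=
  g_has_root_beta_neg_general p μ₁ μ₂ β hμ₂ hp hβ1 hβ2 g hg
end

section
/- Let p > 1, μ > 0, τ > 0 and k > 0 be real numbers and β̃ a real number such that μ + β̃·τ^p = τ^{2p−2} + β̃·τ^{p−2} and k^{2p−2}·(μ + β̃·τ^p) = 1. Define a = (μ(2p−1) + β̃(p−1)τ^p)·k^{2p−2}, b = β̃·p·τ^{p−1}·k^{2p−2}, c = ((2p−1)τ^{2p−2} + β̃(p−1)τ^{p−2})·k^{2p−2}. Then (a − (2p−1))·(c − (2p−1)) = b², and a + c − (2p−1) = (μ(2p−1) + β̃(p−1)τ^p − β̃pτ^{p−2})/(μ + β̃τ^p). In particular, the symmetric 2×2 matrix with entries a, b, b, c has eigenvalues 2p−1 and (μ(2p−1) + β̃(p−1)τ^p − β̃pτ^{p−2})/(μ + β̃τ^p). -/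
/-- The linearization coefficients `a, b, c` at a proportional solution satisfy
`(a - (2p-1))(c - (2p-1)) = b²` and
`a + c - (2p-1) = (μ(2p-1) + β̃(p-1)τ^p - β̃pτ^{p-2}) / (μ + β̃τ^p)`;
in particular the symmetric matrix `!![a, b; b, c]` has eigenvalues `2p-1` and
`(μ(2p-1) + β̃(p-1)τ^p - β̃pτ^{p-2}) / (μ + β̃τ^p)`. -/
theorem linearization_eigenvalues (p μ τ k β : ℝ) (hp : 1 < p) (hμ : 0 < μ)
    (hτ : 0 < τ) (hk : 0 < k)
    (heq : μ + β * τ ^ p = τ ^ (2 * p - 2) + β * τ ^ (p - 2))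
    (hkeq : k ^ (2 * p - 2) * (μ + β * τ ^ p) = 1)
    (a b c : ℝ)
    (ha : a = (μ * (2 * p - 1) + β * (p - 1) * τ ^ p) * k ^ (2 * p - 2))
    (hb : b = β * p * τ ^ (p - 1) * k ^ (2 * p - 2))
    (hc : c = ((2 * p - 1) * τ ^ (2 * p - 2) + β * (p - 1) * τ ^ (p - 2)) * k ^ (2 * p - 2)) :
    (a - (2 * p - 1)) * (c - (2 * p - 1)) = b ^ 2 ∧
    a + c - (2 * p - 1)
      = (μ * (2 * p - 1) + β * (p - 1) * τ ^ p - β * p * τ ^ (p - 2)) / (μ + β * τ ^ p) ∧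
    (∃ v : Fin 2 → ℝ, v ≠ 0 ∧ Matrix.mulVec !![a, b; b, c] v = (2 * p - 1) • v) ∧
    (∃ v : Fin 2 → ℝ, v ≠ 0 ∧ Matrix.mulVec !![a, b; b, c] v =
      ((μ * (2 * p - 1) + β * (p - 1) * τ ^ p - β * p * τ ^ (p - 2)) / (μ + β * τ ^ p)) • v) := by
  have hKpos : (0:ℝ) < k ^ (2 * p - 2) := Real.rpow_pos_of_pos hk _
  have hSpos : (0:ℝ) < μ + β * τ ^ p := by nlinarith [hkeq, hKpos]
  have hQQ : τ ^ (p - 1) * τ ^ (p - 1) = τ ^ (p - 2) * τ ^ p := by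
    rw [← Real.rpow_add hτ, ← Real.rpow_add hτ]
    ring_nf
  have h1 : a - (2 * p - 1) = -(k ^ (2 * p - 2) * (β * p) * τ ^ p) := by
    linear_combination ha + (2 * p - 1) * hkeq
  have h2 : c - (2 * p - 1) = -(k ^ (2 * p - 2) * (β * p) * τ ^ (p - 2)) := by
    linear_combination hc + (2 * p - 1) * hkeq - (2 * p - 1) * k ^ (2 * p - 2) * heq
  have hsum : a + c - (2 * p - 1)
      = (μ * (2 * p - 1) + β * (p - 1) * τ ^ p - β * p * τ ^ (p - 2)) / (μ + β * τ ^ p) := by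
    have h3 : a + c - (2 * p - 1)
        = k ^ (2 * p - 2) * (μ * (2 * p - 1) + β * (p - 1) * τ ^ p - β * p * τ ^ (p - 2)) := by
      linear_combination ha + h2
    rw [eq_div_iff hSpos.ne', h3]
    linear_combination (μ * (2 * p - 1) + β * (p - 1) * τ ^ p - β * p * τ ^ (p - 2)) * hkeq
  refine ⟨?_, hsum, ?_, ?_⟩
  · have hprod : (a - (2 * p - 1)) * (c - (2 * p - 1))
        = (k ^ (2 * p - 2) * (β * p)) ^ 2 * (τ ^ (p - 2) * τ ^ p) := by
      rw [h1, h2]; ring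
    rw [hprod, ← hQQ, hb]; ring
  · refine ⟨![τ ^ (p - 1), τ ^ p], ?_, ?_⟩
    · exact Function.ne_iff.mpr ⟨0, by simp [(Real.rpow_pos_of_pos hτ (p - 1)).ne']⟩
    · funext i
      fin_cases i <;>
        simp [Matrix.mulVec, dotProduct, Fin.sum_univ_two]
      · linear_combination τ ^ (p - 1) * h1 + τ ^ p * hb
      · linear_combination τ ^ (p - 1) * hb + τ ^ p * h2 + k ^ (2 * p - 2) * β * p * hQQ
  · refine ⟨![τ ^ p, -(τ ^ (p - 1))], ?_, ?_⟩
    · exact Function.ne_iff.mpr ⟨0, by simp [(Real.rpow_pos_of_pos hτ p).ne']⟩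
    · rw [← hsum]
      funext i
      fin_cases i <;>
        simp [Matrix.mulVec, dotProduct, Fin.sum_univ_two]
      · linear_combination -τ ^ (p - 1) * hb - τ ^ p * h2 - k ^ (2 * p - 2) * β * p * hQQ
      · linear_combination τ ^ p * hb + τ ^ (p - 1) * h1
end

section
/- Let μ₁ > μ₂ > 0 and p > 2 be real numbers and let β satisfy 0 < β ≤ (p−1)μ₂. Define f(τ) = (1+τ²)/(μ₁ + 2βτ^p + μ₂τ^{2p})^{1/p} for τ ≥ 0. Then there exists τ₀ > 1 such that f is strictly increasing on [0, τ₀] and strictly decreasing on [τ₀, +∞); consequently τ₀ is the unique maximum point of f on [0, +∞), and f(τ) > f(0) = μ₁^{−1/p} for every τ > 0, so 0 is the unique minimum point of f on [0, +∞). -/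
/-!
Up to the positive factor `2τ / denom^(1/p+1)`, the derivative of `f` is
`φ(τ) = μ₁ + βτ^p - βτ^(p-2) - μ₂τ^(2p-2)`. Writing
`φ = (μ₁ - μ₂) + μ₂ G + ((p-1)μ₂ - β)(τ^(p-2) - τ^p)` with
`G(τ) = 1 - τ^(2p-2) - (p-1)(τ^(p-2) - τ^p)`, which is strictly decreasing with `G(1) = 0`
(its derivative has the sign of `pτ² - (p-2) - 2τ^p`, negative by Bernoulli's inequality), one
sees that `φ > 0` on `(0, 1]` and that `φ` is strictly decreasing on `[1, ∞)`; as `φ → -∞`,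
it changes sign exactly once, at some `τ₀ > 1`.

For the minimum, `f(τ⁻¹)` is `f(τ)` with `μ₁` and `μ₂` exchanged, which is smaller than `f(τ)`
when `τ > 1` because `μ₂ < μ₁`; hence `f 0 < f τ⁻¹ < f τ` for `τ > τ₀`.
-/

open Real Set

lemma rpow_eq_pow_mul_rpow {x : ℝ} (hx : 0 < x) {a b : ℝ} (n : ℕ) (h : a = n + b) :
    x ^ a = x ^ n * x ^ b := by
  rw [h, rpow_add hx, rpow_natCast]

-- Bernoulli's inequality for `(τ²)^(p/2)`
lemma mul_sq_sub_lt_two_mul_rpow {p τ : ℝ} (hp : 2 < p) (hτ : 0 ≤ τ) (hτ1 : τ ≠ 1) :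
    p * τ ^ 2 - (p - 2) < 2 * τ ^ p := by
  have hs : τ ^ 2 - 1 ≠ 0 := sub_ne_zero.2 ((pow_eq_one_iff_of_nonneg hτ two_ne_zero).not.2 hτ1)
  have hb := one_add_mul_self_lt_rpow_one_add (by nlinarith) hs (by linarith : (1 : ℝ) < p / 2)
  have hpow : (τ ^ 2) ^ (p / 2) = τ ^ p := by
    rw [← rpow_two, ← rpow_mul hτ, mul_div_cancel₀ _ two_ne_zero]
  rw [add_sub_cancel, hpow] at hb
  linear_combination 2 * hb

noncomputable section

namespace EnergyRatio

def G (p τ : ℝ) : ℝ := 1 - τ ^ (2 * p - 2) - (p - 1) * (τ ^ (p - 2) - τ ^ p)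

lemma hasDerivAt_G (p : ℝ) {τ : ℝ} (hτ : 0 < τ) :
    HasDerivAt (G p) ((p - 1) * τ ^ (p - 3) * (p * τ ^ 2 - (p - 2) - 2 * τ ^ p)) τ := by
  have h₁ := hasDerivAt_rpow_const (x := τ) (p := 2 * p - 2) (Or.inl hτ.ne')
  have h₂ := hasDerivAt_rpow_const (x := τ) (p := p - 2) (Or.inl hτ.ne')
  have h₃ := hasDerivAt_rpow_const (x := τ) (p := p) (Or.inl hτ.ne')
  refine ((h₁.const_sub 1).sub ((h₂.sub h₃).const_mul (p - 1))).congr_deriv ?_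
  have e₁ : τ ^ (2 * p - 2 - 1) = τ ^ (p - 3) * τ ^ p := by rw [← rpow_add hτ]; ring_nf
  have e₂ : τ ^ (p - 2 - 1) = τ ^ (p - 3) := by ring_nf
  rw [e₁, e₂, rpow_eq_pow_mul_rpow hτ 2 (a := p - 1) (b := p - 3) (by push_cast; ring)]
  ring

lemma G_deriv_neg {p τ : ℝ} (hp : 2 < p) (hτ : 0 < τ) (hτ1 : τ ≠ 1) :
    (p - 1) * τ ^ (p - 3) * (p * τ ^ 2 - (p - 2) - 2 * τ ^ p) < 0 :=
  mul_neg_of_pos_of_neg (mul_pos (by linarith) (rpow_pos_of_pos hτ _))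
    (by linarith [mul_sq_sub_lt_two_mul_rpow hp hτ.le hτ1])

lemma G_strictAntiOn {p : ℝ} (hp : 2 < p) : StrictAntiOn (G p) (Ioi 0) := by
  have hcont : ContinuousOn (G p) (Ioi 0) := fun τ hτ =>
    (hasDerivAt_G p hτ).continuousAt.continuousWithinAt
  have anti : ∀ s : Set ℝ, Convex ℝ s → s ⊆ Ioi 0 → (1 : ℝ) ∉ interior s →
      StrictAntiOn (G p) s := fun s hs hs0 hs1 =>
    strictAntiOn_of_deriv_neg hs (hcont.mono hs0) fun τ hτ => by
      have hτ0 : 0 < τ := hs0 (interior_subset hτ)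
      rw [(hasDerivAt_G p hτ0).deriv]
      exact G_deriv_neg hp hτ0 (ne_of_mem_of_not_mem hτ hs1)
  rw [← Ioc_union_Ici_eq_Ioi zero_lt_one]
  refine (anti _ (convex_Ioc 0 1) Ioc_subset_Ioi_self ?_).union
    (anti _ (convex_Ici 1) (fun τ hτ => mem_Ioi.2 (one_pos.trans_le hτ)) ?_)
    (isGreatest_Ioc zero_lt_one) isLeast_Ici
  · simp
  · simp

def phi (p μ₁ μ₂ β τ : ℝ) : ℝ := μ₁ + β * τ ^ p - β * τ ^ (p - 2) - μ₂ * τ ^ (2 * p - 2)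

lemma phi_eq (p μ₁ μ₂ β τ : ℝ) :
    phi p μ₁ μ₂ β τ =
      (μ₁ - μ₂) + μ₂ * G p τ + ((p - 1) * μ₂ - β) * (τ ^ (p - 2) - τ ^ p) := by
  unfold phi G; ring

lemma rpow_sub_two_sub_rpow_antitoneOn {p : ℝ} (hp : 2 ≤ p) :
    AntitoneOn (fun τ : ℝ => τ ^ (p - 2) - τ ^ p) (Ici 1) := by
  intro a (ha : 1 ≤ a) b (hb : 1 ≤ b) hab
  have split : ∀ τ : ℝ, 1 ≤ τ → τ ^ p = τ ^ 2 * τ ^ (p - 2) := fun τ hτ =>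
    rpow_eq_pow_mul_rpow (one_pos.trans_le hτ) 2 (by push_cast; ring)
  simp only [split a ha, split b hb]
  have h₁ : a ^ (p - 2) ≤ b ^ (p - 2) := rpow_le_rpow (by linarith) hab (by linarith)
  have h₂ : a ^ 2 ≤ b ^ 2 := pow_le_pow_left₀ (by linarith) hab 2
  have h₃ : 1 ≤ a ^ (p - 2) := one_le_rpow ha (by linarith)
  nlinarith [one_le_pow₀ (n := 2) ha]

variable {p μ₁ μ₂ β : ℝ}

lemma phi_pos_of_le_one (h12 : μ₂ < μ₁) (hμ₂ : 0 < μ₂) (hp : 2 < p)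
    (hβ : β ≤ (p - 1) * μ₂) {τ : ℝ} (hτ : 0 < τ) (hτ1 : τ ≤ 1) : 0 < phi p μ₁ μ₂ β τ := by
  have hG : 0 ≤ G p τ := by
    have := (G_strictAntiOn hp).antitoneOn hτ (mem_Ioi.2 one_pos) hτ1
    simpa [G] using this
  have hψ : τ ^ p ≤ τ ^ (p - 2) := rpow_le_rpow_of_exponent_ge hτ hτ1 (by linarith)
  rw [phi_eq]
  have := mul_nonneg hμ₂.le hG
  have := mul_nonneg (sub_nonneg.2 hβ) (sub_nonneg.2 hψ)
  linarith

lemma phi_strictAntiOn (hμ₂ : 0 < μ₂) (hp : 2 < p) (hβ : β ≤ (p - 1) * μ₂) :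
    StrictAntiOn (phi p μ₁ μ₂ β) (Ici 1) := by
  intro a ha b hb hab
  have hG := G_strictAntiOn hp (mem_Ioi.2 (one_pos.trans_le ha))
    (mem_Ioi.2 (one_pos.trans_le hb)) hab
  have hψ := rpow_sub_two_sub_rpow_antitoneOn hp.le ha hb hab.le
  rw [phi_eq, phi_eq]
  have := mul_lt_mul_of_pos_left hG hμ₂
  have := mul_le_mul_of_nonneg_left hψ (sub_nonneg.2 hβ)
  linarith

lemma continuous_phi (hp : 2 < p) : Continuous (phi p μ₁ μ₂ β) := by
  unfold phi
  have := continuous_rpow_const (q := p) (by linarith)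
  have := continuous_rpow_const (q := p - 2) (by linarith)
  have := continuous_rpow_const (q := 2 * p - 2) (by linarith)
  fun_prop

lemma exists_phi_neg (hμ₁ : 0 < μ₁) (hμ₂ : 0 < μ₂) (hp : 2 < p) (hβ0 : 0 < β) :
    ∃ T, 1 ≤ T ∧ phi p μ₁ μ₂ β T < 0 := by
  set C := max 1 ((μ₁ + β) / μ₂)
  have hC : 1 ≤ C := le_max_left _ _
  set T := C ^ (p - 2)⁻¹
  have hT : 1 ≤ T := one_le_rpow hC (inv_nonneg.2 (by linarith))
  refine ⟨T, hT, ?_⟩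
  have hTC : T ^ (p - 2) = C := by
    rw [← rpow_mul (by linarith), inv_mul_cancel₀ (by linarith), rpow_one]
  have hTp : 1 ≤ T ^ p := one_le_rpow hT (by linarith)
  have hsplit : T ^ (2 * p - 2) = T ^ p * T ^ (p - 2) := by
    rw [← rpow_add (by linarith)]; ring_nf
  have hlarge : μ₁ + β ≤ μ₂ * T ^ (p - 2) := by
    rw [hTC, ← div_le_iff₀' hμ₂]; exact le_max_right _ _
  have hpos : 0 < T ^ (p - 2) := by linarith
  unfold phi
  rw [hsplit]
  nlinarith [mul_le_mul_of_nonneg_left hlarge (by linarith : (0 : ℝ) ≤ T ^ p)]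

lemma exists_phi_sign_change (h12 : μ₂ < μ₁) (hμ₂ : 0 < μ₂) (hp : 2 < p) (hβ0 : 0 < β)
    (hβ : β ≤ (p - 1) * μ₂) :
    ∃ τ₀, 1 < τ₀ ∧ (∀ τ, 0 < τ → τ < τ₀ → 0 < phi p μ₁ μ₂ β τ) ∧
      ∀ τ, τ₀ < τ → phi p μ₁ μ₂ β τ < 0 := by
  obtain ⟨T, hT, hφT⟩ := exists_phi_neg (hμ₂.trans h12) hμ₂ hp hβ0
  have hφ1 : 0 < phi p μ₁ μ₂ β 1 := phi_pos_of_le_one h12 hμ₂ hp hβ one_pos le_rfl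
  obtain ⟨τ₀, ⟨hτ₀1, -⟩, hτ₀⟩ :=
    intermediate_value_Ioo' hT (continuous_phi hp).continuousOn ⟨hφT, hφ1⟩
  have anti := phi_strictAntiOn (μ₁ := μ₁) hμ₂ hp hβ
  refine ⟨τ₀, hτ₀1, fun τ hτ hττ₀ => ?_, fun τ hτ₀τ => ?_⟩
  · rcases le_or_gt τ 1 with h | h
    · exact phi_pos_of_le_one h12 hμ₂ hp hβ hτ h
    · exact hτ₀ ▸ anti (mem_Ici.2 h.le) (mem_Ici.2 hτ₀1.le) hττ₀
  · exact hτ₀ ▸ anti (mem_Ici.2 hτ₀1.le) (mem_Ici.2 (hτ₀1.trans hτ₀τ).le) hτ₀τ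

def denom (p μ₁ μ₂ β τ : ℝ) : ℝ := μ₁ + 2 * β * τ ^ p + μ₂ * τ ^ (2 * p)

def ratio (p μ₁ μ₂ β τ : ℝ) : ℝ := (1 + τ ^ 2) / denom p μ₁ μ₂ β τ ^ (1 / p)

lemma denom_pos (hμ₁ : 0 < μ₁) (hμ₂ : 0 ≤ μ₂) (hβ : 0 ≤ β) {τ : ℝ} (hτ : 0 ≤ τ) :
    0 < denom p μ₁ μ₂ β τ := by
  unfold denom
  have := rpow_nonneg hτ p
  have := rpow_nonneg hτ (2 * p)
  positivity

lemma two_mul_phi_eq (p μ₁ μ₂ β : ℝ) {τ : ℝ} (hτ : 0 < τ) :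
    2 * τ * phi p μ₁ μ₂ β τ = 2 * τ * denom p μ₁ μ₂ β τ
      - (1 + τ ^ 2) * (2 * β * τ ^ (p - 1) + 2 * μ₂ * τ ^ (2 * p - 1)) := by
  unfold phi denom
  rw [rpow_eq_pow_mul_rpow hτ 2 (a := p) (b := p - 2) (by push_cast; ring),
    rpow_eq_pow_mul_rpow hτ 1 (a := p - 1) (b := p - 2) (by push_cast; ring),
    rpow_eq_pow_mul_rpow hτ 2 (a := 2 * p) (b := 2 * p - 2) (by push_cast; ring),
    rpow_eq_pow_mul_rpow hτ 1 (a := 2 * p - 1) (b := 2 * p - 2) (by push_cast; ring)]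
  ring

lemma hasDerivAt_ratio (hμ₁ : 0 < μ₁) (hμ₂ : 0 ≤ μ₂) (hβ : 0 ≤ β) (hp : p ≠ 0) {τ : ℝ}
    (hτ : 0 < τ) :
    HasDerivAt (ratio p μ₁ μ₂ β)
      (2 * τ * phi p μ₁ μ₂ β τ / denom p μ₁ μ₂ β τ ^ (1 / p + 1)) τ := by
  have hd := denom_pos (p := p) hμ₁ hμ₂ hβ hτ.le
  have h₁ := hasDerivAt_rpow_const (x := τ) (p := p) (Or.inl hτ.ne')
  have h₂ := hasDerivAt_rpow_const (x := τ) (p := 2 * p) (Or.inl hτ.ne')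
  have hD : HasDerivAt (denom p μ₁ μ₂ β)
      (2 * β * (p * τ ^ (p - 1)) + μ₂ * (2 * p * τ ^ (2 * p - 1))) τ :=
    ((h₁.const_mul (2 * β)).const_add μ₁).add (h₂.const_mul μ₂)
  have hN : HasDerivAt (fun x : ℝ => 1 + x ^ 2) (2 * τ) τ := by
    simpa using (hasDerivAt_pow 2 τ).const_add (1 : ℝ)
  refine (hN.div (hD.rpow_const (p := 1 / p) (Or.inl hd.ne'))
    (rpow_pos_of_pos hd _).ne').congr_deriv ?_
  rw [two_mul_phi_eq p μ₁ μ₂ β hτ, rpow_sub_one hd.ne', rpow_add_one hd.ne']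
  have := rpow_pos_of_pos hd (1 / p)
  field_simp

lemma continuousOn_ratio (hμ₁ : 0 < μ₁) (hμ₂ : 0 ≤ μ₂) (hβ : 0 ≤ β) (hp : 0 < p) :
    ContinuousOn (ratio p μ₁ μ₂ β) (Ici 0) := by
  have := continuous_rpow_const (q := p) hp.le
  have := continuous_rpow_const (q := 2 * p) (by linarith)
  have hD : Continuous (denom p μ₁ μ₂ β) := by unfold denom; fun_prop
  refine (continuous_const.add (continuous_pow 2)).continuousOn.div
    (hD.continuousOn.rpow_const fun _ _ => Or.inr (by positivity)) fun τ hτ => ?_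
  exact (rpow_pos_of_pos (denom_pos hμ₁ hμ₂ hβ hτ) _).ne'

lemma ratio_strictMonoOn (hμ₁ : 0 < μ₁) (hμ₂ : 0 ≤ μ₂) (hβ : 0 ≤ β) (hp : 0 < p) {τ₀ : ℝ}
    (hφ : ∀ τ, 0 < τ → τ < τ₀ → 0 < phi p μ₁ μ₂ β τ) :
    StrictMonoOn (ratio p μ₁ μ₂ β) (Icc 0 τ₀) := by
  refine strictMonoOn_of_deriv_pos (convex_Icc 0 τ₀)
    ((continuousOn_ratio hμ₁ hμ₂ hβ hp).mono Icc_subset_Ici_self) fun τ hτ => ?_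
  rw [interior_Icc] at hτ
  rw [(hasDerivAt_ratio hμ₁ hμ₂ hβ hp.ne' hτ.1).deriv]
  exact div_pos (mul_pos (by linarith [hτ.1]) (hφ τ hτ.1 hτ.2))
    (rpow_pos_of_pos (denom_pos hμ₁ hμ₂ hβ hτ.1.le) _)

lemma ratio_strictAntiOn (hμ₁ : 0 < μ₁) (hμ₂ : 0 ≤ μ₂) (hβ : 0 ≤ β) (hp : 0 < p) {τ₀ : ℝ}
    (hτ₀ : 0 ≤ τ₀) (hφ : ∀ τ, τ₀ < τ → phi p μ₁ μ₂ β τ < 0) :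
    StrictAntiOn (ratio p μ₁ μ₂ β) (Ici τ₀) := by
  refine strictAntiOn_of_deriv_neg (convex_Ici τ₀)
    ((continuousOn_ratio hμ₁ hμ₂ hβ hp).mono (Ici_subset_Ici.2 hτ₀)) fun τ hτ => ?_
  rw [interior_Ici] at hτ
  have hτ0 : 0 < τ := hτ₀.trans_lt hτ
  rw [(hasDerivAt_ratio hμ₁ hμ₂ hβ hp.ne' hτ0).deriv]
  exact div_neg_of_neg_of_pos (mul_neg_of_pos_of_neg (by positivity) (hφ τ hτ))
    (rpow_pos_of_pos (denom_pos hμ₁ hμ₂ hβ hτ0.le) _)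

lemma ratio_zero (hμ₁ : 0 ≤ μ₁) (hp : p ≠ 0) : ratio p μ₁ μ₂ β 0 = μ₁ ^ (-(1 / p)) := by
  simp [ratio, denom, zero_rpow hp, zero_rpow (mul_ne_zero two_ne_zero hp), rpow_neg hμ₁]

lemma ratio_inv (hμ₁ : 0 ≤ μ₁) (hμ₂ : 0 < μ₂) (hβ : 0 ≤ β) (hp : p ≠ 0) {τ : ℝ}
    (hτ : 0 < τ) :
    ratio p μ₁ μ₂ β τ⁻¹ = ratio p μ₂ μ₁ β τ := by
  have hpow : τ ^ (2 * p) = (τ ^ 2) ^ p := by rw [← rpow_two, ← rpow_mul hτ.le]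
  have hsq : (τ ^ 2) ^ p = (τ ^ p) ^ 2 := by rw [← hpow, mul_comm, rpow_mul hτ.le, rpow_two]
  have hden : denom p μ₁ μ₂ β τ⁻¹ = denom p μ₂ μ₁ β τ / (τ ^ 2) ^ p := by
    have := rpow_pos_of_pos hτ p
    unfold denom
    rw [inv_rpow hτ.le, inv_rpow hτ.le, hpow, hsq]
    field_simp
    ring
  unfold ratio
  rw [hden, div_rpow (denom_pos hμ₂ hμ₁ hβ hτ.le).le (by positivity), one_div p,
    rpow_rpow_inv (sq_nonneg τ) hp]
  field_simp
  ring

lemma ratio_swap_lt (h12 : μ₂ < μ₁) (hμ₂ : 0 ≤ μ₂) (hβ : 0 ≤ β) (hp : 0 < p) {τ : ℝ}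
    (hτ : 1 < τ) : ratio p μ₂ μ₁ β τ < ratio p μ₁ μ₂ β τ := by
  have hμ₁ : 0 < μ₁ := hμ₂.trans_lt h12
  have hd := denom_pos (p := p) (β := β) hμ₁ hμ₂ hβ (zero_le_one.trans hτ.le)
  have hlt : denom p μ₁ μ₂ β τ < denom p μ₂ μ₁ β τ := by
    have := one_lt_rpow hτ (by linarith : 0 < 2 * p)
    unfold denom
    nlinarith
  exact div_lt_div_of_pos_left (by positivity) (rpow_pos_of_pos hd _)
    (rpow_lt_rpow hd.le hlt (by positivity))

end EnergyRatio

open EnergyRatio in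
/-- For `μ₁ > μ₂ > 0`, `p > 2`, `0 < β ≤ (p-1)μ₂`, the function
`f(τ) = (1+τ²)/(μ₁ + 2βτ^p + μ₂τ^{2p})^{1/p}` has a unique maximum point `τ₀ > 1`
on `[0,∞)`: `f` is strictly increasing on `[0,τ₀]` and strictly decreasing on `[τ₀,∞)`,
and `0` is its unique minimum point, with `f(0) = μ₁^{-1/p} < f(τ)` for all `τ > 0`. -/
theorem f_shape_p_gt_two_beta_small (p μ₁ μ₂ β : ℝ) (h12 : μ₂ < μ₁) (hμ₂ : 0 < μ₂)
    (hp : 2 < p) (hβ0 : 0 < β) (hβ : β ≤ (p - 1) * μ₂)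
    (f : ℝ → ℝ)
    (hf : ∀ τ, 0 ≤ τ → f τ = (1 + τ ^ 2) / (μ₁ + 2 * β * τ ^ p + μ₂ * τ ^ (2 * p)) ^ (1 / p)) :
    ∃ τ₀ : ℝ, 1 < τ₀ ∧
      StrictMonoOn f (Set.Icc 0 τ₀) ∧
      StrictAntiOn f (Set.Ici τ₀) ∧
      (∀ τ, 0 ≤ τ → τ ≠ τ₀ → f τ < f τ₀) ∧
      f 0 = μ₁ ^ (-(1 / p)) ∧
      (∀ τ, 0 < τ → f 0 < f τ) := by
  have hμ₁ : 0 < μ₁ := hμ₂.trans h12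
  have hp0 : 0 < p := by linarith
  have hfr : EqOn f (ratio p μ₁ μ₂ β) (Ici 0) := hf
  obtain ⟨τ₀, hτ₀, hφpos, hφneg⟩ := exists_phi_sign_change h12 hμ₂ hp hβ0 hβ
  have hmono : StrictMonoOn f (Icc 0 τ₀) :=
    (ratio_strictMonoOn hμ₁ hμ₂.le hβ0.le hp0 hφpos).congr (hfr.mono Icc_subset_Ici_self).symm
  have hanti : StrictAntiOn f (Ici τ₀) :=
    (ratio_strictAntiOn hμ₁ hμ₂.le hβ0.le hp0 (by linarith) hφneg).congr
      (hfr.mono (Ici_subset_Ici.2 (by linarith))).symm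
  have hτ₀mem : τ₀ ∈ Icc 0 τ₀ := ⟨by linarith, le_rfl⟩
  refine ⟨τ₀, hτ₀, hmono, hanti, fun τ hτ hne => ?_, ?_, fun τ hτ => ?_⟩
  · rcases hne.lt_or_gt with h | h
    · exact hmono ⟨hτ, h.le⟩ hτ₀mem h
    · exact hanti self_mem_Ici h.le h
  · rw [hf 0 le_rfl]
    exact ratio_zero hμ₁.le hp0.ne'
  rcases le_or_gt τ τ₀ with h | h
  · exact hmono ⟨le_rfl, hτ₀mem.1⟩ ⟨hτ.le, h⟩ hτ
  have hτ1 : 1 < τ := hτ₀.trans h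
  have hinv : τ⁻¹ < 1 := inv_lt_one_of_one_lt₀ hτ1
  calc f 0 < f τ⁻¹ := hmono ⟨le_rfl, hτ₀mem.1⟩ ⟨(inv_pos.2 hτ).le, by linarith⟩ (inv_pos.2 hτ)
    _ = ratio p μ₂ μ₁ β τ := by
      rw [hf _ (inv_pos.2 hτ).le]; exact ratio_inv hμ₁.le hμ₂ hβ0.le hp0.ne' hτ
    _ < ratio p μ₁ μ₂ β τ := ratio_swap_lt h12 hμ₂.le hβ0.le hp0 hτ1
    _ = f τ := (hf τ hτ.le).symm
end
end

section
/- Let μ₁ > μ₂ > 0 be real numbers, let p = 2 and let β > μ₁. Define f(τ) = (1+τ²)/(μ₁ + 2βτ² + μ₂τ⁴)^{1/2} for τ ≥ 0 and set τ₀ = √((β−μ₁)/(β−μ₂)). Then f is strictly decreasing on [0, τ₀] and strictly increasing on [τ₀, +∞); consequently τ₀ is the unique minimum point of f on [0, +∞) and 0 is a local maximum point of f. -/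
private lemma sqrt_div_lt_sqrt_div (x y u v : ℝ) (hx : 0 ≤ x) (hy : 0 ≤ y)
    (hu : 0 < u) (hv : 0 < v) (h : x ^ 2 * u < y ^ 2 * v) :
    x / Real.sqrt v < y / Real.sqrt u := by
  have hsu : 0 < Real.sqrt u := Real.sqrt_pos.2 hu
  have hsv : 0 < Real.sqrt v := Real.sqrt_pos.2 hv
  rw [div_lt_div_iff₀ hsv hsu]
  have h1 : x * Real.sqrt u = Real.sqrt (x ^ 2 * u) := by
    rw [Real.sqrt_mul (sq_nonneg x), Real.sqrt_sq hx]
  have h2 : y * Real.sqrt v = Real.sqrt (y ^ 2 * v) := by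
    rw [Real.sqrt_mul (sq_nonneg y), Real.sqrt_sq hy]
  rw [h1, h2]
  exact Real.sqrt_lt_sqrt (by positivity) h

private lemma poly_dec (μ₁ μ₂ β A B : ℝ) (h12 : μ₂ < μ₁) (hμ₂ : 0 < μ₂) (hβ : μ₁ < β)
    (hA : 0 ≤ A) (hAB : A < B) (hB : (β - μ₂) * B ≤ β - μ₁) :
    (1 + B) ^ 2 * (μ₁ + 2 * β * A + μ₂ * A ^ 2) <
      (1 + A) ^ 2 * (μ₁ + 2 * β * B + μ₂ * B ^ 2) := by
  have hcA : (β - μ₂) * A < β - μ₁ := by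
    have : (β - μ₂) * A < (β - μ₂) * B := by
      apply mul_lt_mul_of_pos_left hAB; linarith
    linarith
  have hE : 2 * (μ₁ - β) + (A + B) * (μ₁ - μ₂) + 2 * A * B * (β - μ₂) < 0 := by
    have hcE : (β - μ₂) * (2 * (μ₁ - β) + (A + B) * (μ₁ - μ₂) + 2 * A * B * (β - μ₂)) < 0 := by
      nlinarith [mul_nonneg (mul_nonneg (by linarith : (0:ℝ) ≤ β - μ₂) hA)
          (by linarith : (0:ℝ) ≤ (β - μ₁) - (β - μ₂) * B),
        mul_pos (by linarith : (0:ℝ) < μ₁ - μ₂)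
          (by linarith : (0:ℝ) < (β - μ₁) - (β - μ₂) * A),
        mul_nonneg (by linarith : (0:ℝ) ≤ μ₁ - μ₂)
          (by linarith : (0:ℝ) ≤ (β - μ₁) - (β - μ₂) * B),
        mul_pos (by linarith : (0:ℝ) < β - μ₁)
          (by linarith : (0:ℝ) < (β - μ₁) - (β - μ₂) * A)]
    by_contra hcon
    push_neg at hcon
    nlinarith [mul_nonneg (by linarith : (0:ℝ) ≤ β - μ₂) hcon]
  nlinarith [mul_pos (by linarith : (0:ℝ) < B - A)
    (by linarith : (0:ℝ) < -(2 * (μ₁ - β) + (A + B) * (μ₁ - μ₂) + 2 * A * B * (β - μ₂)))]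

private lemma poly_inc (μ₁ μ₂ β A B : ℝ) (h12 : μ₂ < μ₁) (hμ₂ : 0 < μ₂) (hβ : μ₁ < β)
    (hA : β - μ₁ ≤ (β - μ₂) * A) (hAB : A < B) :
    (1 + A) ^ 2 * (μ₁ + 2 * β * B + μ₂ * B ^ 2) <
      (1 + B) ^ 2 * (μ₁ + 2 * β * A + μ₂ * A ^ 2) := by
  have hA0 : 0 ≤ A := by
    by_contra h
    push_neg at h
    nlinarith
  have hcB : β - μ₁ < (β - μ₂) * B := by
    have : (β - μ₂) * A < (β - μ₂) * B := by
      apply mul_lt_mul_of_pos_left hAB; linarith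
    linarith
  have hB0 : 0 ≤ B := le_trans hA0 hAB.le
  have hE : 0 < 2 * (μ₁ - β) + (A + B) * (μ₁ - μ₂) + 2 * A * B * (β - μ₂) := by
    have hcE : 0 < (β - μ₂) * (2 * (μ₁ - β) + (A + B) * (μ₁ - μ₂) + 2 * A * B * (β - μ₂)) := by
      nlinarith [mul_nonneg (mul_nonneg (by linarith : (0:ℝ) ≤ β - μ₂) hB0)
          (by linarith : (0:ℝ) ≤ (β - μ₂) * A - (β - μ₁)),
        mul_pos (by linarith : (0:ℝ) < μ₁ - μ₂)
          (by linarith : (0:ℝ) < (β - μ₂) * B - (β - μ₁)),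
        mul_nonneg (by linarith : (0:ℝ) ≤ μ₁ - μ₂)
          (by linarith : (0:ℝ) ≤ (β - μ₂) * A - (β - μ₁)),
        mul_pos (by linarith : (0:ℝ) < β - μ₁)
          (by linarith : (0:ℝ) < (β - μ₂) * B - (β - μ₁))]
    by_contra hcon
    push_neg at hcon
    nlinarith [mul_nonneg (by linarith : (0:ℝ) ≤ β - μ₂)
      (by linarith : (0:ℝ) ≤ -(2 * (μ₁ - β) + (A + B) * (μ₁ - μ₂) + 2 * A * B * (β - μ₂)))]
  nlinarith [mul_pos (by linarith : (0:ℝ) < B - A) hE]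

/-- For `μ₁ > μ₂ > 0`, `p = 2`, `β > μ₁`, the function
`f(τ) = (1+τ²)/(μ₁ + 2βτ² + μ₂τ⁴)^{1/2}` is strictly decreasing on `[0,τ₀]` and strictly
increasing on `[τ₀,∞)`, where `τ₀ = √((β-μ₁)/(β-μ₂))`; hence `τ₀` is its unique minimum
point on `[0,∞)` and `0` is a local maximum point. -/
theorem f_shape_p_eq_two_beta_large (μ₁ μ₂ β : ℝ) (h12 : μ₂ < μ₁) (hμ₂ : 0 < μ₂)
    (hβ : μ₁ < β)
    (f : ℝ → ℝ)
    (hf : ∀ τ, 0 ≤ τ → f τ = (1 + τ ^ 2) / (μ₁ + 2 * β * τ ^ 2 + μ₂ * τ ^ 4) ^ ((1 : ℝ) / 2))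
    (τ₀ : ℝ) (hτ₀ : τ₀ = Real.sqrt ((β - μ₁) / (β - μ₂))) :
    StrictAntiOn f (Set.Icc 0 τ₀) ∧
    StrictMonoOn f (Set.Ici τ₀) ∧
    (∀ τ, 0 ≤ τ → τ ≠ τ₀ → f τ₀ < f τ) ∧
    IsLocalMaxOn f (Set.Ici 0) 0 := by
  have hμ₁ : 0 < μ₁ := lt_trans hμ₂ h12
  have hcd : (0:ℝ) < β - μ₂ := by linarith
  have hd0 : (0:ℝ) < β - μ₁ := by linarith
  have ht₀ : (0:ℝ) < (β - μ₁) / (β - μ₂) := div_pos hd0 hcd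
  have hτ₀pos : 0 < τ₀ := by rw [hτ₀]; exact Real.sqrt_pos.2 ht₀
  have hτ₀sq : τ₀ ^ 2 = (β - μ₁) / (β - μ₂) := by
    rw [hτ₀, Real.sq_sqrt ht₀.le]
  have hQ : ∀ τ : ℝ, 0 < μ₁ + 2 * β * τ ^ 2 + μ₂ * τ ^ 4 := by
    intro τ
    have h1 : 0 ≤ 2 * β * τ ^ 2 := mul_nonneg (by linarith) (sq_nonneg τ)
    have h2 : 0 ≤ μ₂ * τ ^ 4 := by positivity
    linarith
  have hfs : ∀ τ : ℝ, 0 ≤ τ →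
      f τ = (1 + τ ^ 2) / Real.sqrt (μ₁ + 2 * β * τ ^ 2 + μ₂ * τ ^ 4) := by
    intro τ hτ
    rw [hf τ hτ, Real.sqrt_eq_rpow]
  -- main comparison lemmas
  have key_dec : ∀ a b : ℝ, 0 ≤ a → a < b → (β - μ₂) * b ^ 2 ≤ β - μ₁ → f b < f a := by
    intro a b ha hab hb
    rw [hfs a ha, hfs b (le_trans ha hab.le)]
    refine sqrt_div_lt_sqrt_div (1 + b ^ 2) (1 + a ^ 2)
      (μ₁ + 2 * β * a ^ 2 + μ₂ * a ^ 4) (μ₁ + 2 * β * b ^ 2 + μ₂ * b ^ 4)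
      (by positivity) (by positivity) (hQ a) (hQ b) ?_
    have := poly_dec μ₁ μ₂ β (a ^ 2) (b ^ 2) h12 hμ₂ hβ (by positivity)
      (by nlinarith) hb
    nlinarith [this]
  have key_inc : ∀ a b : ℝ, 0 ≤ a → a < b → β - μ₁ ≤ (β - μ₂) * a ^ 2 → f a < f b := by
    intro a b ha hab hb
    rw [hfs a ha, hfs b (le_trans ha hab.le)]
    refine sqrt_div_lt_sqrt_div (1 + a ^ 2) (1 + b ^ 2)
      (μ₁ + 2 * β * b ^ 2 + μ₂ * b ^ 4) (μ₁ + 2 * β * a ^ 2 + μ₂ * a ^ 4)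
      (by positivity) (by positivity) (hQ b) (hQ a) ?_
    have := poly_inc μ₁ μ₂ β (a ^ 2) (b ^ 2) h12 hμ₂ hβ hb (by nlinarith)
    nlinarith [this]
  have hanti : StrictAntiOn f (Set.Icc 0 τ₀) := by
    intro a ha b hb hab
    apply key_dec a b ha.1 hab
    have hb2 : b ^ 2 ≤ (β - μ₁) / (β - μ₂) := by
      rw [← hτ₀sq]
      have hb0 : 0 ≤ b := le_trans ha.1 hab.le
      exact pow_le_pow_left₀ hb0 hb.2 2
    calc (β - μ₂) * b ^ 2 ≤ (β - μ₂) * ((β - μ₁) / (β - μ₂)) :=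
          mul_le_mul_of_nonneg_left hb2 hcd.le
      _ = β - μ₁ := by field_simp
  have hmono : StrictMonoOn f (Set.Ici τ₀) := by
    intro a ha b hb hab
    have ha0 : 0 ≤ a := le_trans hτ₀pos.le ha
    apply key_inc a b ha0 hab
    have ha2 : (β - μ₁) / (β - μ₂) ≤ a ^ 2 := by
      rw [← hτ₀sq]
      exact pow_le_pow_left₀ hτ₀pos.le ha 2
    calc β - μ₁ = (β - μ₂) * ((β - μ₁) / (β - μ₂)) := by field_simp
      _ ≤ (β - μ₂) * a ^ 2 := mul_le_mul_of_nonneg_left ha2 hcd.le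
  refine ⟨hanti, hmono, ?_, ?_⟩
  · intro τ hτ hne
    rcases lt_or_gt_of_ne hne with h | h
    · exact hanti ⟨hτ, h.le⟩ ⟨hτ₀pos.le, le_refl _⟩ h
    · exact hmono (Set.self_mem_Ici) h.le h
  · have h1 : ∀ᶠ x in nhdsWithin (0:ℝ) (Set.Ici 0), x ∈ Set.Icc (0:ℝ) τ₀ := by
      filter_upwards [self_mem_nhdsWithin,
        eventually_nhdsWithin_of_eventually_nhds (Iio_mem_nhds hτ₀pos)] with x hx hx'
      exact ⟨hx, le_of_lt hx'⟩
    exact h1.mono fun x hx =>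
      hanti.antitoneOn ⟨le_refl 0, hτ₀pos.le⟩ hx hx.1
end

section
/- Let μ₁ > μ₂ > 0 be real numbers, let p = 2 and let β satisfy 0 < β < μ₂. Define f(τ) = (1+τ²)/(μ₁ + 2βτ² + μ₂τ⁴)^{1/2} for τ ≥ 0 and set τ₀ = √((μ₁−β)/(μ₂−β)). Then τ₀ > 1, f is strictly increasing on [0, τ₀] and strictly decreasing on [τ₀, +∞); consequently τ₀ is the unique maximum point of f on [0, +∞), and f(τ) > f(0) = μ₁^{−1/2} for every τ > 0, so 0 is the unique minimum point of f on [0, +∞). -/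
set_option maxHeartbeats 800000


/-- For `μ₁ > μ₂ > 0`, `p = 2`, `0 < β < μ₂`, the function
`f(τ) = (1+τ²)/(μ₁ + 2βτ² + μ₂τ⁴)^{1/2}` satisfies: `τ₀ = √((μ₁-β)/(μ₂-β)) > 1`, `f` is
strictly increasing on `[0,τ₀]` and strictly decreasing on `[τ₀,∞)`; hence `τ₀` is the
unique maximum point on `[0,∞)`, and `f(0) = μ₁^{-1/2} < f(τ)` for all `τ > 0`, so `0` is
the unique minimum point on `[0,∞)`. -/
theorem f_shape_p_eq_two_beta_small (μ₁ μ₂ β : ℝ) (h12 : μ₂ < μ₁) (hμ₂ : 0 < μ₂)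
    (hβ0 : 0 < β) (hβ : β < μ₂)
    (f : ℝ → ℝ)
    (hf : ∀ τ, 0 ≤ τ → f τ = (1 + τ ^ 2) / (μ₁ + 2 * β * τ ^ 2 + μ₂ * τ ^ 4) ^ ((1 : ℝ) / 2))
    (τ₀ : ℝ) (hτ₀ : τ₀ = Real.sqrt ((μ₁ - β) / (μ₂ - β))) :
    1 < τ₀ ∧
    StrictMonoOn f (Set.Icc 0 τ₀) ∧
    StrictAntiOn f (Set.Ici τ₀) ∧
    (∀ τ, 0 ≤ τ → τ ≠ τ₀ → f τ < f τ₀) ∧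
    f 0 = μ₁ ^ (-(1 : ℝ) / 2) ∧
    (∀ τ, 0 < τ → f 0 < f τ) := by
  have hμ₁ : 0 < μ₁ := hμ₂.trans h12
  have hβμ₁ : β < μ₁ := hβ.trans h12
  have h2b : 0 < μ₂ - β := by linarith
  set t₀ : ℝ := (μ₁ - β) / (μ₂ - β) with ht₀def
  have ht₀1 : 1 < t₀ := (one_lt_div h2b).2 (by linarith)
  have ht₀pos : 0 < t₀ := by linarith
  have hτ₀nn : 0 ≤ τ₀ := hτ₀ ▸ Real.sqrt_nonneg _
  have hτ₀sq : τ₀ ^ 2 = t₀ := by rw [hτ₀]; exact Real.sq_sqrt ht₀pos.le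
  have hτ₀1 : 1 < τ₀ := by nlinarith
  have hc : (μ₂ - β) * t₀ = μ₁ - β := by rw [ht₀def]; field_simp
  set D : ℝ → ℝ := fun τ => μ₁ + 2 * β * τ ^ 2 + μ₂ * τ ^ 4 with hD
  have hDpos : ∀ τ, 0 < D τ := fun τ => by positivity
  have hfs : ∀ τ, 0 ≤ τ → f τ = (1 + τ ^ 2) / Real.sqrt (D τ) := by
    intro τ hτ
    rw [hf τ hτ, ← Real.sqrt_eq_rpow]
  -- key comparison lemma
  have key : ∀ a b : ℝ, 0 ≤ a → 0 ≤ b →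
      (1 + a ^ 2) ^ 2 * D b < (1 + b ^ 2) ^ 2 * D a → f a < f b := by
    intro a b ha hb h
    rw [hfs a ha, hfs b hb,
      div_lt_div_iff₀ (Real.sqrt_pos.2 (hDpos a)) (Real.sqrt_pos.2 (hDpos b))]
    have e1 : (1 + a ^ 2) * Real.sqrt (D b) = Real.sqrt ((1 + a ^ 2) ^ 2 * D b) := by
      rw [Real.sqrt_mul (by positivity), Real.sqrt_sq (by positivity)]
    have e2 : (1 + b ^ 2) * Real.sqrt (D a) = Real.sqrt ((1 + b ^ 2) ^ 2 * D a) := by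
      rw [Real.sqrt_mul (by positivity), Real.sqrt_sq (by positivity)]
    rw [e1, e2]
    exact Real.sqrt_lt_sqrt (by positivity) h
  -- algebraic core, increasing part
  have Ginc : ∀ x y : ℝ, 0 ≤ x → x < y → y ≤ t₀ →
      0 < 2 * (μ₁ - β) + (μ₁ - μ₂) * (x + y) - 2 * (μ₂ - β) * (x * y) := by
    intro x y hx hxy hy
    have h2 : (μ₂ - β) * y ≤ μ₁ - β := by nlinarith
    have h1 : (μ₂ - β) * (x * y) ≤ (μ₁ - β) * x := by nlinarith
    have h2x : (μ₂ - β) * x < μ₁ - β := by nlinarith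
    nlinarith [mul_pos (show (0:ℝ) < μ₁ - μ₂ by linarith) (sub_pos.2 hxy)]
  have Gdec : ∀ x y : ℝ, t₀ ≤ x → x < y →
      2 * (μ₁ - β) + (μ₁ - μ₂) * (x + y) - 2 * (μ₂ - β) * (x * y) < 0 := by
    intro x y hx hxy
    have hy : t₀ < y := lt_of_le_of_lt hx hxy
    have hx1 : μ₁ - β ≤ (μ₂ - β) * x := by nlinarith
    have hy1 : μ₁ - β < (μ₂ - β) * y := by nlinarith
    have h1 : (μ₁ - β) * y ≤ (μ₂ - β) * (x * y) := by nlinarith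
    nlinarith [mul_pos (show (0:ℝ) < μ₁ - β by linarith) (sub_pos.2 hxy)]
  -- polynomial identity
  have ident : ∀ x y : ℝ,
      (1 + y) ^ 2 * (μ₁ + 2 * β * x + μ₂ * x ^ 2) -
        (1 + x) ^ 2 * (μ₁ + 2 * β * y + μ₂ * y ^ 2) =
      (y - x) * (2 * (μ₁ - β) + (μ₁ - μ₂) * (x + y) - 2 * (μ₂ - β) * (x * y)) := by
    intro x y; ring
  have Dsq : ∀ a : ℝ, D a = μ₁ + 2 * β * (a ^ 2) + μ₂ * (a ^ 2) ^ 2 := by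
    intro a; simp only [hD]; ring
  have mono : StrictMonoOn f (Set.Icc 0 τ₀) := by
    intro a ha b hb hab
    apply key a b ha.1 hb.1
    have hxy : a ^ 2 < b ^ 2 := by nlinarith [ha.1]
    have hy : b ^ 2 ≤ t₀ := by nlinarith [hb.2, hb.1, hτ₀nn]
    have hG := Ginc (a ^ 2) (b ^ 2) (by positivity) hxy hy
    have hid := ident (a ^ 2) (b ^ 2)
    rw [Dsq a, Dsq b]
    linarith [hid, mul_pos (sub_pos.2 hxy) hG]
  have anti : StrictAntiOn f (Set.Ici τ₀) := by
    intro a ha b hb hab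
    have ha0 : 0 ≤ a := hτ₀nn.trans ha
    have hb0 : 0 ≤ b := hτ₀nn.trans hb
    apply key b a hb0 ha0
    have hxy : a ^ 2 < b ^ 2 := by nlinarith
    have hx : t₀ ≤ a ^ 2 := by nlinarith [Set.mem_Ici.1 ha]
    have hG := Gdec (a ^ 2) (b ^ 2) hx hxy
    have hid := ident (a ^ 2) (b ^ 2)
    rw [Dsq a, Dsq b]
    linarith [hid, mul_pos (sub_pos.2 hxy) (neg_pos.2 hG)]
  refine ⟨hτ₀1, mono, anti, ?_, ?_, ?_⟩
  · intro τ hτ hne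
    rcases lt_or_gt_of_ne hne with h | h
    · exact mono ⟨hτ, h.le⟩ ⟨hτ₀nn, le_rfl⟩ h
    · exact anti (Set.mem_Ici.2 le_rfl) (Set.mem_Ici.2 h.le) h
  · rw [hf 0 le_rfl]
    norm_num
    exact (Real.rpow_neg hμ₁.le _).symm
  · intro τ hτ
    apply key 0 τ le_rfl hτ.le
    have hD0 : D 0 = μ₁ := by rw [Dsq]; norm_num
    have hDτ := Dsq τ
    rw [hDτ, hD0]
    nlinarith [mul_pos (show (0:ℝ) < μ₁ - β by linarith) (pow_pos hτ 2),
      mul_pos (show (0:ℝ) < μ₁ - μ₂ by linarith) (pow_pos hτ 4), pow_pos hτ 2, pow_pos hτ 4]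
end

section
/- Let μ₁ > μ₂ > 0 and 1 < p < 2 be real numbers and let β ≥ (p−1)μ₂. Define f(τ) = (1+τ²)/(μ₁ + 2βτ^p + μ₂τ^{2p})^{1/p} for τ ≥ 0. Then there exists τ₀ ∈ (0, 1) such that f is strictly decreasing on [0, τ₀] and strictly increasing on [τ₀, +∞); consequently τ₀ is the unique minimum point of f on [0, +∞) and 0 is a local maximum point of f. -/
/-!
With `G(τ) = μ₁ + 2βτ^p + μ₂τ^{2p}` (`profileBase`) one computes
`f'(τ) = 2τ Q(τ) / G(τ)^{1/p+1}`, where `Q(τ) = μ₁ + βτ^p - βτ^{p-2} - μ₂τ^{2p-2}`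
(`profileSlopeFactor`). The function `Q` is strictly increasing on `(0, ∞)`: its derivative is
`τ^{p-3} (β(pτ² + 2 - p) - 2(p-1)μ₂τ^p)`, which is positive for `τ ≠ 1` because `β ≥ (p-1)μ₂`
and, by Bernoulli's inequality, `2τ^p < pτ² + 2 - p`. As `p < 2`, `Q → -∞` at `0⁺`, while
`Q(1) = μ₁ - μ₂ > 0`; so `Q` has a single zero `τ₀ ∈ (0, 1)`, at which `f'` changes sign from
negative to positive.
-/

open Set Filter Topology

theorem two_mul_rpow_lt_mul_sq_add {p t : ℝ} (hp0 : 0 < p) (hp2 : p < 2) (ht : 0 ≤ t)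
    (ht1 : t ≠ 1) : 2 * t ^ p < p * t ^ 2 + (2 - p) := by
  have hsq : t ^ 2 - 1 ≠ 0 := fun h => ht1 (by nlinarith [sq_nonneg (t - 1)])
  have h := rpow_one_add_lt_one_add_mul_self (s := t ^ 2 - 1) (by nlinarith) hsq
    (p := p / 2) (by positivity) (by linarith)
  rw [add_sub_cancel, ← Real.rpow_natCast_mul ht, Nat.cast_ofNat,
    mul_div_cancel₀ p two_ne_zero] at h
  linarith

noncomputable def profileBase (p μ₁ μ₂ β τ : ℝ) : ℝ :=
  μ₁ + 2 * β * τ ^ p + μ₂ * τ ^ (2 * p)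

noncomputable def profile (p μ₁ μ₂ β τ : ℝ) : ℝ :=
  (1 + τ ^ 2) / profileBase p μ₁ μ₂ β τ ^ (1 / p)

noncomputable def profileSlopeFactor (p μ₁ μ₂ β t : ℝ) : ℝ :=
  μ₁ + β * t ^ p - β * t ^ (p - 2) - μ₂ * t ^ (2 * p - 2)

section

variable {p μ₁ μ₂ β : ℝ}

theorem hasDerivAt_profileSlopeFactor {t : ℝ} (ht : 0 < t) :
    HasDerivAt (profileSlopeFactor p μ₁ μ₂ β)
      (t ^ (p - 3) * (β * (p * t ^ 2 + (2 - p)) - 2 * (p - 1) * μ₂ * t ^ p)) t := by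
  have hpow (q : ℝ) := Real.hasDerivAt_rpow_const (x := t) (p := q) (Or.inl ht.ne')
  refine ((((hpow p).const_mul β).const_add μ₁).sub ((hpow (p - 2)).const_mul β)).sub
    ((hpow (2 * p - 2)).const_mul μ₂) |>.congr_deriv ?_
  rw [show p - 1 = (p - 3) + 2 by ring, show p - 2 - 1 = p - 3 by ring,
    show 2 * p - 2 - 1 = (p - 3) + p by ring, Real.rpow_add ht, Real.rpow_add ht, Real.rpow_two]
  ring

theorem profileSlopeFactor_strictMonoOn (hμ₂ : 0 < μ₂) (hp1 : 1 < p) (hp2 : p < 2)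
    (hβ : (p - 1) * μ₂ ≤ β) : StrictMonoOn (profileSlopeFactor p μ₁ μ₂ β) (Ioi 0) := by
  have hderiv_pos {t : ℝ} (ht : 0 < t) (ht1 : t ≠ 1) :
      0 < t ^ (p - 3) * (β * (p * t ^ 2 + (2 - p)) - 2 * (p - 1) * μ₂ * t ^ p) := by
    have hamgm := two_mul_rpow_lt_mul_sq_add (by linarith) hp2 ht.le ht1
    have hc : 0 < (p - 1) * μ₂ := mul_pos (by linarith) hμ₂
    have hS : 0 ≤ p * t ^ 2 + (2 - p) := by positivity
    refine mul_pos (Real.rpow_pos_of_pos ht _) ?_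
    nlinarith [mul_le_mul_of_nonneg_right hβ hS, mul_lt_mul_of_pos_left hamgm hc]
  have hcont : ContinuousOn (profileSlopeFactor p μ₁ μ₂ β) (Ioi 0) := fun t ht =>
    (hasDerivAt_profileSlopeFactor ht).continuousAt.continuousWithinAt
  have hleft : StrictMonoOn (profileSlopeFactor p μ₁ μ₂ β) (Ioc 0 1) := by
    refine strictMonoOn_of_deriv_pos (convex_Ioc 0 1) (hcont.mono Ioc_subset_Ioi_self) ?_
    intro t ht
    rw [interior_Ioc] at ht
    rw [(hasDerivAt_profileSlopeFactor ht.1).deriv]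
    exact hderiv_pos ht.1 ht.2.ne
  have hright : StrictMonoOn (profileSlopeFactor p μ₁ μ₂ β) (Ici 1) := by
    refine strictMonoOn_of_deriv_pos (convex_Ici 1) (hcont.mono fun t ht => ?_) ?_
    · exact zero_lt_one.trans_le (mem_Ici.mp ht)
    intro t ht
    rw [interior_Ici] at ht
    rw [(hasDerivAt_profileSlopeFactor (zero_lt_one.trans ht)).deriv]
    exact hderiv_pos (zero_lt_one.trans ht) (ne_of_gt ht)
  rw [← Ioc_union_Ici_eq_Ioi zero_lt_one]
  exact hleft.union hright (isGreatest_Ioc zero_lt_one) isLeast_Ici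

theorem tendsto_profileSlopeFactor_nhdsGT_zero (hμ₂ : 0 ≤ μ₂) (hβ : 0 < β) (hp0 : 0 < p)
    (hp2 : p < 2) : Tendsto (profileSlopeFactor p μ₁ μ₂ β) (𝓝[>] 0) atBot := by
  have hbound : Tendsto (fun t : ℝ => μ₁ + β * t ^ p + -(β * t ^ (p - 2))) (𝓝[>] 0) atBot := by
    refine Tendsto.add_atBot (C := μ₁ + β * 0 ^ p) ?_ ?_
    · have hcont := Real.continuousAt_rpow_const 0 p (Or.inr hp0.le)
      exact tendsto_const_nhds.add ((hcont.tendsto.mono_left nhdsWithin_le_nhds).const_mul β)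
    · exact tendsto_neg_atTop_atBot.comp
        ((tendsto_rpow_neg_nhdsGT_zero (by linarith)).const_mul_atTop hβ)
  refine tendsto_atBot_mono' _ ?_ hbound
  filter_upwards [self_mem_nhdsWithin] with t ht
  have : 0 ≤ μ₂ * t ^ (2 * p - 2) := mul_nonneg hμ₂ (Real.rpow_nonneg (le_of_lt ht) _)
  simp only [profileSlopeFactor]
  linarith

theorem exists_profileSlopeFactor_eq_zero (h12 : μ₂ < μ₁) (hμ₂ : 0 < μ₂) (hp1 : 1 < p)
    (hp2 : p < 2) (hβ : (p - 1) * μ₂ ≤ β) :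
    ∃ τ₀ ∈ Ioo 0 1, profileSlopeFactor p μ₁ μ₂ β τ₀ = 0 := by
  have hβ0 : 0 < β := (mul_pos (by linarith) hμ₂).trans_le hβ
  obtain ⟨a, ha_neg, ha⟩ := ((tendsto_profileSlopeFactor_nhdsGT_zero hμ₂.le hβ0 (by linarith)
    hp2).eventually_lt_atBot 0 |>.and (Ioo_mem_nhdsGT zero_lt_one)).exists
  have h_one_pos : 0 < profileSlopeFactor p μ₁ μ₂ β 1 := by
    simp [profileSlopeFactor, h12]
  have hcont : ContinuousOn (profileSlopeFactor p μ₁ μ₂ β) (Icc a 1) := fun t ht =>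
    (hasDerivAt_profileSlopeFactor (ha.1.trans_le ht.1)).continuousAt.continuousWithinAt
  obtain ⟨τ₀, hτ₀, hzero⟩ := intermediate_value_Ioo ha.2.le hcont ⟨ha_neg, h_one_pos⟩
  exact ⟨τ₀, ⟨ha.1.trans hτ₀.1, hτ₀.2⟩, hzero⟩

theorem profileBase_pos (hμ₁ : 0 < μ₁) (hμ₂ : 0 ≤ μ₂) (hβ : 0 ≤ β) {τ : ℝ} (hτ : 0 ≤ τ) :
    0 < profileBase p μ₁ μ₂ β τ := by
  unfold profileBase
  positivity

theorem hasDerivAt_profileBase {τ : ℝ} (hτ : 0 < τ) :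
    HasDerivAt (profileBase p μ₁ μ₂ β)
      (2 * p * (β * τ ^ (p - 1) + μ₂ * τ ^ (2 * p - 1))) τ := by
  have hpow (q : ℝ) := Real.hasDerivAt_rpow_const (x := τ) (p := q) (Or.inl hτ.ne')
  refine (((hpow p).const_mul (2 * β)).const_add μ₁).add ((hpow (2 * p)).const_mul μ₂)
    |>.congr_deriv ?_
  ring

theorem hasDerivAt_profile (hp : p ≠ 0) {τ : ℝ} (hτ : 0 < τ)
    (hG : 0 < profileBase p μ₁ μ₂ β τ) :
    HasDerivAt (profile p μ₁ μ₂ β)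
      (2 * τ * profileSlopeFactor p μ₁ μ₂ β τ / profileBase p μ₁ μ₂ β τ ^ (1 / p + 1)) τ := by
  have hnum : HasDerivAt (fun t : ℝ => 1 + t ^ 2) (2 * τ) τ := by
    simpa using (hasDerivAt_pow 2 τ).const_add 1
  have hden := (hasDerivAt_profileBase (p := p) (μ₁ := μ₁) (μ₂ := μ₂) (β := β) hτ).rpow_const
    (p := 1 / p) (Or.inl hG.ne')
  have hy := Real.rpow_pos_of_pos hG (1 / p)
  refine (hnum.div hden hy.ne').congr_deriv ?_
  have hsq (q : ℝ) : τ ^ (q - 2) = τ ^ q / τ ^ 2 := by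
    rw [Real.rpow_sub hτ, Real.rpow_two]
  have hG_eq : profileBase p μ₁ μ₂ β τ = μ₁ + 2 * β * τ ^ p + μ₂ * τ ^ p * τ ^ p := by
    rw [profileBase, two_mul p, Real.rpow_add hτ]
    ring
  rw [Real.rpow_sub_one hG.ne', Real.rpow_add_one hG.ne', Real.rpow_sub_one hτ.ne',
    Real.rpow_sub_one hτ.ne', profileSlopeFactor, hsq, show 2 * p - 2 = (p + p) - 2 by ring,
    hsq, Real.rpow_add hτ, two_mul p, Real.rpow_add hτ]
  generalize profileBase p μ₁ μ₂ β τ ^ (1 / p) = y at *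
  generalize profileBase p μ₁ μ₂ β τ = G at *
  field_simp
  linear_combination 2 * τ ^ 2 * hG_eq

theorem continuousAt_profile (hp : 0 < p) {τ : ℝ}
    (hG : 0 < profileBase p μ₁ μ₂ β τ) : ContinuousAt (profile p μ₁ μ₂ β) τ := by
  have hbase : ContinuousAt (profileBase p μ₁ μ₂ β) τ :=
    (continuousAt_const.add (continuousAt_const.mul
      (Real.continuousAt_rpow_const _ _ (Or.inr hp.le)))).add
      (continuousAt_const.mul (Real.continuousAt_rpow_const _ _ (Or.inr (by positivity))))
  exact (continuousAt_const.add (continuousAt_pow τ 2)).div (hbase.rpow_const (Or.inl hG.ne'))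
    (Real.rpow_pos_of_pos hG _).ne'

theorem profile_strictAntiOn_Icc (hp : 0 < p) (hμ₁ : 0 < μ₁) (hμ₂ : 0 ≤ μ₂) (hβ : 0 ≤ β)
    (hQ : StrictMonoOn (profileSlopeFactor p μ₁ μ₂ β) (Ioi 0)) {τ₀ : ℝ} (hτ₀ : 0 < τ₀)
    (hQτ₀ : profileSlopeFactor p μ₁ μ₂ β τ₀ = 0) :
    StrictAntiOn (profile p μ₁ μ₂ β) (Icc 0 τ₀) := by
  refine strictAntiOn_of_deriv_neg (convex_Icc 0 τ₀) (fun τ hτ =>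
    (continuousAt_profile hp (profileBase_pos hμ₁ hμ₂ hβ hτ.1)).continuousWithinAt) ?_
  intro τ hτ
  rw [interior_Icc] at hτ
  have hG := profileBase_pos (p := p) hμ₁ hμ₂ hβ hτ.1.le
  rw [(hasDerivAt_profile hp.ne' hτ.1 hG).deriv]
  have hQτ : profileSlopeFactor p μ₁ μ₂ β τ < 0 := hQτ₀ ▸ hQ hτ.1 hτ₀ hτ.2
  exact div_neg_of_neg_of_pos (mul_neg_of_pos_of_neg (by linarith [hτ.1]) hQτ)
    (Real.rpow_pos_of_pos hG _)

theorem profile_strictMonoOn_Ici (hp : 0 < p) (hμ₁ : 0 < μ₁) (hμ₂ : 0 ≤ μ₂) (hβ : 0 ≤ β)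
    (hQ : StrictMonoOn (profileSlopeFactor p μ₁ μ₂ β) (Ioi 0)) {τ₀ : ℝ} (hτ₀ : 0 < τ₀)
    (hQτ₀ : profileSlopeFactor p μ₁ μ₂ β τ₀ = 0) :
    StrictMonoOn (profile p μ₁ μ₂ β) (Ici τ₀) := by
  refine strictMonoOn_of_deriv_pos (convex_Ici τ₀) (fun τ hτ => (continuousAt_profile hp
    (profileBase_pos hμ₁ hμ₂ hβ (hτ₀.le.trans hτ))).continuousWithinAt) ?_
  intro τ hτ
  rw [interior_Ici] at hτ
  have hτ0 : 0 < τ := hτ₀.trans hτ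
  have hG := profileBase_pos (p := p) hμ₁ hμ₂ hβ hτ0.le
  rw [(hasDerivAt_profile hp.ne' hτ0 hG).deriv]
  have hQτ : 0 < profileSlopeFactor p μ₁ μ₂ β τ := hQτ₀ ▸ hQ hτ₀ hτ0 hτ
  exact div_pos (mul_pos (by linarith) hQτ) (Real.rpow_pos_of_pos hG _)

end

/-- For `μ₁ > μ₂ > 0`, `1 < p < 2`, `β ≥ (p-1)μ₂`, the function
`f(τ) = (1+τ²)/(μ₁ + 2βτ^p + μ₂τ^{2p})^{1/p}` has a unique minimum point `τ₀ ∈ (0,1)`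
on `[0,∞)`: `f` is strictly decreasing on `[0,τ₀]` and strictly increasing on `[τ₀,∞)`,
and `0` is a local maximum point. -/
theorem f_shape_p_lt_two_beta_large (p μ₁ μ₂ β : ℝ) (h12 : μ₂ < μ₁) (hμ₂ : 0 < μ₂)
    (hp1 : 1 < p) (hp2 : p < 2) (hβ : (p - 1) * μ₂ ≤ β)
    (f : ℝ → ℝ)
    (hf : ∀ τ, 0 ≤ τ → f τ = (1 + τ ^ 2) / (μ₁ + 2 * β * τ ^ p + μ₂ * τ ^ (2 * p)) ^ (1 / p)) :
    ∃ τ₀ : ℝ, 0 < τ₀ ∧ τ₀ < 1 ∧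
      StrictAntiOn f (Set.Icc 0 τ₀) ∧
      StrictMonoOn f (Set.Ici τ₀) ∧
      (∀ τ, 0 ≤ τ → τ ≠ τ₀ → f τ₀ < f τ) ∧
      IsLocalMaxOn f (Set.Ici 0) 0 := by
  have hp0 : 0 < p := by linarith
  have hβ0 : 0 ≤ β := (mul_pos (by linarith) hμ₂).le.trans hβ
  have hμ₁ : 0 < μ₁ := hμ₂.trans h12
  obtain ⟨τ₀, ⟨hτ₀0, hτ₀1⟩, hQτ₀⟩ := exists_profileSlopeFactor_eq_zero h12 hμ₂ hp1 hp2 hβ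
  have hQ := profileSlopeFactor_strictMonoOn (μ₁ := μ₁) hμ₂ hp1 hp2 hβ
  have hanti : StrictAntiOn f (Icc 0 τ₀) :=
    (profile_strictAntiOn_Icc hp0 hμ₁ hμ₂.le hβ0 hQ hτ₀0 hQτ₀).congr fun τ hτ => (hf τ hτ.1).symm
  have hmono : StrictMonoOn f (Ici τ₀) :=
    (profile_strictMonoOn_Ici hp0 hμ₁ hμ₂.le hβ0 hQ hτ₀0 hQτ₀).congr fun τ hτ =>
      (hf τ (hτ₀0.le.trans hτ)).symm
  refine ⟨τ₀, hτ₀0, hτ₀1, hanti, hmono, fun τ hτ hne => ?_, ?_⟩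
  · rcases hne.lt_or_gt with h | h
    · exact hanti ⟨hτ, h.le⟩ ⟨hτ₀0.le, le_rfl⟩ h
    · exact hmono self_mem_Ici h.le h
  · filter_upwards [Icc_mem_nhdsGE hτ₀0] with τ hτ
    exact hanti.antitoneOn ⟨le_rfl, hτ₀0.le⟩ hτ hτ.1
end

section
/- Let μ₁ > μ₂ > 0 and 1 < p < 2 be real numbers and let β satisfy 0 < β < (p−1)μ₂. Define f(τ) = (1+τ²)/(μ₁ + 2βτ^p + μ₂τ^{2p})^{1/p} for τ ≥ 0. Then f attains its infimum over [0, +∞) at some point τ* > 0, and inf_{τ ≥ 0} f(τ) < f(0) = μ₁^{−1/p}. -/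
set_option maxHeartbeats 1600000 in
/-- For `μ₁ > μ₂ > 0`, `1 < p < 2`, `0 < β < (p-1)μ₂`, the function
`f(τ) = (1+τ²)/(μ₁ + 2βτ^p + μ₂τ^{2p})^{1/p}` attains its infimum over `[0,∞)` at some
`τ* > 0`, and this infimum is `< f(0) = μ₁^{-1/p}`. -/
theorem f_min_p_lt_two_beta_small (p μ₁ μ₂ β : ℝ) (h12 : μ₂ < μ₁) (hμ₂ : 0 < μ₂)
    (hp1 : 1 < p) (hp2 : p < 2) (hβ0 : 0 < β) (hβ : β < (p - 1) * μ₂)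
    (f : ℝ → ℝ)
    (hf : ∀ τ, 0 ≤ τ → f τ = (1 + τ ^ 2) / (μ₁ + 2 * β * τ ^ p + μ₂ * τ ^ (2 * p)) ^ (1 / p)) :
    ∃ τstar : ℝ, 0 < τstar ∧ (∀ τ, 0 ≤ τ → f τstar ≤ f τ) ∧
      f τstar < f 0 ∧ f 0 = μ₁ ^ (-(1 / p)) := by
  have hp0 : 0 < p := by linarith
  have hq : 0 < 1 / p := by positivity
  have hμ₁ : 0 < μ₁ := lt_trans hμ₂ h12
  set D : ℝ → ℝ := fun τ => μ₁ + 2 * β * τ ^ p + μ₂ * τ ^ (2 * p) with hD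
  set g : ℝ → ℝ := fun τ => (1 + τ ^ 2) ^ p / D τ with hg
  have hDpos : ∀ τ : ℝ, 0 ≤ τ → 0 < D τ := by
    intro τ hτ
    have h1 : 0 ≤ τ ^ p := Real.rpow_nonneg hτ p
    have h2 : 0 ≤ τ ^ (2 * p) := Real.rpow_nonneg hτ (2 * p)
    simp only [hD]
    nlinarith
  have hNpos : ∀ τ : ℝ, (0:ℝ) < 1 + τ ^ 2 := by intro τ; positivity
  have hgpos : ∀ τ : ℝ, 0 ≤ τ → 0 < g τ := by
    intro τ hτ
    have := hDpos τ hτ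
    have : (0:ℝ) < (1 + τ ^ 2) ^ p := Real.rpow_pos_of_pos (hNpos τ) p
    simp only [hg]
    positivity
  -- f τ = (g τ) ^ (1/p)
  have hkey : ∀ τ : ℝ, 0 ≤ τ → f τ = g τ ^ (1 / p) := by
    intro τ hτ
    rw [hf τ hτ]
    have hNn : (0:ℝ) ≤ (1 + τ ^ 2) ^ p := Real.rpow_nonneg (le_of_lt (hNpos τ)) p
    have hDn : 0 ≤ D τ := le_of_lt (hDpos τ hτ)
    simp only [hg]
    rw [Real.div_rpow hNn hDn, ← Real.rpow_mul (le_of_lt (hNpos τ)),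
      mul_one_div_cancel (ne_of_gt hp0), Real.rpow_one]
  -- value at 0
  have hg0 : g 0 = 1 / μ₁ := by
    simp only [hg, hD]
    rw [Real.zero_rpow (ne_of_gt hp0), Real.zero_rpow (by positivity : 2 * p ≠ 0)]
    norm_num
  have hf0 : f 0 = μ₁ ^ (-(1 / p)) := by
    rw [hkey 0 le_rfl, hg0, Real.rpow_neg (le_of_lt hμ₁), one_div,
      Real.inv_rpow (le_of_lt hμ₁)]
  -- comparison lemmas
  have hle : ∀ σ τ : ℝ, 0 ≤ σ → 0 ≤ τ → g σ ≤ g τ → f σ ≤ f τ := by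
    intro σ τ hσ hτ h
    rw [hkey σ hσ, hkey τ hτ]
    exact Real.rpow_le_rpow (le_of_lt (hgpos σ hσ)) h (le_of_lt hq)
  have hlt : ∀ σ τ : ℝ, 0 ≤ σ → 0 ≤ τ → g σ < g τ → f σ < f τ := by
    intro σ τ hσ hτ h
    rw [hkey σ hσ, hkey τ hτ]
    exact Real.rpow_lt_rpow (le_of_lt (hgpos σ hσ)) h hq
  -- the small point τ₀
  set τ₀ : ℝ := min 1 ((β / (3 * μ₁)) ^ (1 / (2 - p))) with hτ₀def
  have h2p : (0:ℝ) < 2 - p := by linarith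
  have hτ₀pos : 0 < τ₀ := by
    apply lt_min one_pos
    exact Real.rpow_pos_of_pos (by positivity) _
  have hτ₀le1 : τ₀ ≤ 1 := min_le_left _ _
  have hτ₀s : τ₀ ^ (2 - p) ≤ β / (3 * μ₁) := by
    have h1 : τ₀ ^ (2 - p) ≤ ((β / (3 * μ₁)) ^ (1 / (2 - p))) ^ (2 - p) :=
      Real.rpow_le_rpow (le_of_lt hτ₀pos) (min_le_right _ _) (le_of_lt h2p)
    rwa [← Real.rpow_mul (by positivity), one_div_mul_cancel (ne_of_gt h2p),
      Real.rpow_one] at h1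
  have hA : μ₁ * (1 + τ₀ ^ 2) ^ p < D τ₀ := by
    have hτp : 0 < τ₀ ^ p := Real.rpow_pos_of_pos hτ₀pos p
    have h2pn : 0 ≤ μ₂ * τ₀ ^ (2 * p) := by
      have := Real.rpow_nonneg (le_of_lt hτ₀pos) (2 * p); positivity
    have hstep1 : (1 + τ₀ ^ 2) ^ p ≤ (1 + τ₀ ^ 2) ^ (2:ℝ) :=
      Real.rpow_le_rpow_of_exponent_le (by nlinarith [sq_nonneg τ₀]) (le_of_lt hp2)
    have hstep2 : (1 + τ₀ ^ 2) ^ (2:ℝ) = (1 + τ₀ ^ 2) ^ (2:ℕ) := by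
      rw [← Real.rpow_natCast (1 + τ₀ ^ 2) 2]; norm_num
    have hsplit : τ₀ ^ p * τ₀ ^ (2 - p) = τ₀ ^ (2:ℕ) := by
      rw [← Real.rpow_add hτ₀pos, ← Real.rpow_natCast τ₀ 2]; norm_num
    have hmul : 3 * μ₁ * τ₀ ^ (2 - p) ≤ β := by
      rw [le_div_iff₀ (by positivity : (0:ℝ) < 3 * μ₁)] at hτ₀s
      linarith
    have h21 : τ₀ ^ (2:ℕ) ≤ 1 := by nlinarith [hτ₀le1, hτ₀pos.le]
    have h4le2 : τ₀ ^ (2:ℕ) * τ₀ ^ (2:ℕ) ≤ τ₀ ^ (2:ℕ) := by nlinarith [sq_nonneg τ₀]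
    have hτ2pos : 0 < τ₀ ^ (2:ℕ) := by positivity
    simp only [hD]
    calc μ₁ * (1 + τ₀ ^ 2) ^ p ≤ μ₁ * (1 + τ₀ ^ 2) ^ (2:ℕ) := by
          rw [← hstep2]; exact mul_le_mul_of_nonneg_left hstep1 (le_of_lt hμ₁)
      _ < μ₁ + 2 * β * τ₀ ^ p + μ₂ * τ₀ ^ (2 * p) := by nlinarith
  have hfτ₀ : f τ₀ < f 0 := by
    apply hlt τ₀ 0 (le_of_lt hτ₀pos) le_rfl
    rw [hg0]
    simp only [hg]
    rw [div_lt_div_iff₀ (hDpos τ₀ (le_of_lt hτ₀pos)) hμ₁]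
    linarith [hA]
  -- large τ bound
  set M : ℝ := max 1 ((μ₁ + 2 * β) / (μ₁ - μ₂)) with hMdef
  have hM1 : (1:ℝ) ≤ M := le_max_left _ _
  have hB : ∀ τ : ℝ, M ≤ τ → f 0 ≤ f τ := by
    intro τ hτM
    have h1τ : (1:ℝ) ≤ τ := le_trans hM1 hτM
    have hτ0 : (0:ℝ) < τ := lt_of_lt_of_le one_pos h1τ
    have hτp1 : τ ≤ τ ^ p := by
      nth_rewrite 1 [← Real.rpow_one τ]
      exact Real.rpow_le_rpow_of_exponent_le h1τ (le_of_lt hp1)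
    have hτp : (1:ℝ) ≤ τ ^ p := le_trans h1τ hτp1
    have hfrac : (μ₁ + 2 * β) / (μ₁ - μ₂) ≤ τ ^ p :=
      le_trans (le_trans (le_max_right _ _) hτM) (le_trans hτp1 (le_refl _))
    have hfrac' : μ₁ + 2 * β ≤ (μ₁ - μ₂) * τ ^ p := by
      rw [div_le_iff₀ (by linarith)] at hfrac; linarith
    have h2pmul : τ ^ (2 * p) = τ ^ p * τ ^ p := by
      rw [two_mul, Real.rpow_add hτ0]
    have hsqle : μ₁ * τ ^ (2 * p) ≤ μ₁ * (1 + τ ^ 2) ^ p := by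
      apply mul_le_mul_of_nonneg_left _ (le_of_lt hμ₁)
      have : τ ^ (2 * p) = (τ ^ (2:ℕ)) ^ p := by
        rw [← Real.rpow_natCast τ 2, ← Real.rpow_mul (le_of_lt hτ0)]; norm_num
      rw [this]
      exact Real.rpow_le_rpow (by positivity) (by nlinarith) (le_of_lt hp0)
    apply hle 0 τ le_rfl (le_of_lt hτ0)
    rw [hg0]
    simp only [hg]
    rw [div_le_div_iff₀ hμ₁ (hDpos τ (le_of_lt hτ0))]
    simp only [hD]
    have e1 : (μ₁ + 2 * β) * τ ^ p ≤ (μ₁ - μ₂) * τ ^ p * τ ^ p :=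
      mul_le_mul_of_nonneg_right hfrac' (Real.rpow_nonneg hτ0.le p)
    have e2 : μ₁ + 2 * β * τ ^ p ≤ (μ₁ + 2 * β) * τ ^ p := by nlinarith [hτp, hμ₁]
    rw [h2pmul] at hsqle ⊢
    nlinarith [e1, e2, hsqle]
  -- continuity on [0, M]
  have hcont : ContinuousOn f (Set.Icc 0 M) := by
    have hcp : ContinuousOn (fun τ : ℝ => τ ^ p) (Set.Icc 0 M) := fun x _ =>
      (Real.continuousAt_rpow_const x p (Or.inr hp0.le)).continuousWithinAt
    have hc2p : ContinuousOn (fun τ : ℝ => τ ^ (2 * p)) (Set.Icc 0 M) := fun x _ =>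
      (Real.continuousAt_rpow_const x (2 * p) (Or.inr (by positivity : (0:ℝ) ≤ 2*p))).continuousWithinAt
    have hcD : ContinuousOn D (Set.Icc 0 M) := by
      simp only [hD]
      exact (continuousOn_const.add (continuousOn_const.mul hcp)).add
        (continuousOn_const.mul hc2p)
    have hcDr : ContinuousOn (fun τ => D τ ^ (1 / p)) (Set.Icc 0 M) :=
      hcD.rpow_const (fun x hx => Or.inl (ne_of_gt (hDpos x hx.1)))
    have hfc : ContinuousOn (fun τ : ℝ => (1 + τ ^ 2) / D τ ^ (1 / p)) (Set.Icc 0 M) := by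
      apply ContinuousOn.div (by fun_prop) hcDr
      intro x hx
      exact ne_of_gt (Real.rpow_pos_of_pos (hDpos x hx.1) _)
    exact hfc.congr (fun x hx => by rw [hf x hx.1])
  obtain ⟨τstar, hmem, hmin⟩ :=
    isCompact_Icc.exists_isMinOn (Set.nonempty_Icc.mpr (by linarith)) hcont
  have hτ₀mem : τ₀ ∈ Set.Icc (0:ℝ) M := ⟨le_of_lt hτ₀pos, le_trans hτ₀le1 hM1⟩
  have hstar_lt : f τstar < f 0 := lt_of_le_of_lt (hmin hτ₀mem) hfτ₀
  have hstarpos : 0 < τstar := by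
    rcases lt_or_eq_of_le hmem.1 with h | h
    · exact h
    · exact absurd hstar_lt (by rw [← h]; exact lt_irrefl _)
  refine ⟨τstar, hstarpos, ?_, hstar_lt, hf0⟩
  intro τ hτ
  rcases le_or_gt τ M with h | h
  · exact hmin ⟨hτ, h⟩
  · exact le_trans (le_of_lt hstar_lt) (hB τ (le_of_lt h))
end
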